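/- arXiv:2506.16930 — 9 statements merged into one kernel-verified Lean document; each statement's English description precedes it below -/
import Mathlib

section
/- For every function f : [0,1] → ℝ, one has (1/2)·‖f‖_w ≤ V(f) ≤ ‖f‖_s, i.e. the weak average smoothness is at most twice the total variation, and the total variation is at most the strong average smoothness. -/
open MeasureTheory Set ENNReal

/-- The local slope of `f` at `x`: `Λ_f(x) = sup_{x' ∈ [0,1], x' ≠ x} |f(x) − f(x')|/|x − x'|`,
valued in `[0,∞]`. -/
noncomputable def locSlope (f : ℝ → ℝ) (x : ℝ) : ℝ≥0∞ :=
  ⨆ (x' : ℝ) (_ : x' ∈ Set.Icc (0:ℝ) 1) (_ : x' ≠ x),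
    ENNReal.ofReal (|f x - f x'| / |x - x'|)

/-- Strong average smoothness: `‖f‖_s = ∫_{[0,1]} Λ_f(x) dx`. -/
noncomputable def strongNorm (f : ℝ → ℝ) : ℝ≥0∞ :=
  ∫⁻ x in Set.Icc (0:ℝ) 1, locSlope f x

/-- Weak average smoothness: `‖f‖_w = sup_{t>0} t·λ({x ∈ [0,1] : Λ_f(x) ≥ t})`. -/
noncomputable def weakNorm (f : ℝ → ℝ) : ℝ≥0∞ :=
  ⨆ (t : ℝ) (_ : 0 < t),
    ENNReal.ofReal t * volume {x ∈ Set.Icc (0:ℝ) 1 | ENNReal.ofReal t ≤ locSlope f x}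

/-- Total variation of `f` on `[0,1]`. -/
noncomputable def totalVar (f : ℝ → ℝ) : ℝ≥0∞ := eVariationOn f (Set.Icc 0 1)

/-!
For `a < x < b`, the triangle inequality through `x` gives `|f b - f a| ≤ Λ_f(x) (b - a)`;
integrating over `(a, b)` and summing over a partition yields `V(f) ≤ ‖f‖_s`.

For the weak bound, every `x` with `Λ_f(x) > c` has a partner `y` with
`c |x - y| < |f x - f y| ≤ V(f, [x ⊓ y, x ⊔ y])`. Up to a countable set, the open intervals
between the points and their partners cover `{Λ_f > c}`, and by inner regularity it suffices to
treat finitely many of them. Selecting them greedily from left to right covers their union by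
intervals each of which meets only its two neighbours in the selection, so the odd-numbered
and the even-numbered ones each cost at most `V(f)`, whence `c λ{Λ_f > c} ≤ 2 V(f)`.
Letting `c ↑ t` bounds `t λ{Λ_f ≥ t}`.
-/

theorem locSlope_eq_iSup_edist_div (f : ℝ → ℝ) (x : ℝ) :
    locSlope f x =
      ⨆ (a : ℝ) (_ : a ∈ Icc (0:ℝ) 1) (_ : a ≠ x), edist (f x) (f a) / edist x a := by
  refine biSup_congr fun a _ => iSup_congr fun hax => ?_
  rw [edist_dist, edist_dist, Real.dist_eq, Real.dist_eq,
    ENNReal.ofReal_div_of_pos (abs_pos.2 (sub_ne_zero.2 hax.symm))]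

theorem edist_le_locSlope_mul (f : ℝ → ℝ) {x a : ℝ} (ha : a ∈ Icc (0:ℝ) 1)
    (hax : a ≠ x) :
    edist (f x) (f a) ≤ locSlope f x * edist x a := by
  rw [← ENNReal.div_le_iff (edist_pos.2 hax.symm).ne' (edist_ne_top _ _),
    locSlope_eq_iSup_edist_div]
  exact le_iSup₂_of_le a ha (le_iSup_of_le hax le_rfl)

theorem exists_mul_edist_lt_of_lt_locSlope (f : ℝ → ℝ) {x : ℝ} {c : ℝ≥0∞}
    (h : c < locSlope f x) :
    ∃ a ∈ Icc (0:ℝ) 1, a ≠ x ∧ c * edist x a < edist (f x) (f a) := by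
  simp only [locSlope_eq_iSup_edist_div, lt_iSup_iff] at h
  obtain ⟨a, ha, hax, hlt⟩ := h
  exact ⟨a, ha, hax, (ENNReal.lt_div_iff_mul_lt (.inl (edist_pos.2 hax.symm).ne')
    (.inl (edist_ne_top _ _))).1 hlt⟩

theorem edist_le_setLIntegral_locSlope (f : ℝ → ℝ) {a b : ℝ} (ha : a ∈ Icc (0:ℝ) 1)
    (hb : b ∈ Icc (0:ℝ) 1) (hab : a < b) :
    edist (f a) (f b) ≤ ∫⁻ x in Ioo a b, locSlope f x := by
  have hvol : volume (Ioo a b) = edist a b := by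
    rw [Real.volume_Ioo, edist_dist, Real.dist_eq, abs_sub_comm, abs_of_pos (sub_pos.2 hab)]
  have hslope : ∀ x ∈ Ioo a b, edist (f a) (f b) ≤ locSlope f x * edist a b := fun x hx => by
    have hsplit : edist x a + edist x b = edist a b := by
      simp only [edist_dist, Real.dist_eq]
      rw [← ENNReal.ofReal_add (abs_nonneg _) (abs_nonneg _), abs_of_pos (sub_pos.2 hx.1),
        abs_of_neg (sub_neg.2 hx.2), abs_of_neg (sub_neg.2 hab)]
      ring_nf
    calc edist (f a) (f b) ≤ edist (f x) (f a) + edist (f x) (f b) := edist_triangle_left _ _ _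
      _ ≤ locSlope f x * edist x a + locSlope f x * edist x b :=
          add_le_add (edist_le_locSlope_mul f ha hx.1.ne) (edist_le_locSlope_mul f hb hx.2.ne')
      _ = locSlope f x * edist a b := by rw [← mul_add, hsplit]
  have hab0 : edist a b ≠ 0 := (edist_pos.2 hab.ne).ne'
  calc edist (f a) (f b) = edist (f a) (f b) / edist a b * volume (Ioo a b) := by
        rw [hvol, ENNReal.div_mul_cancel hab0 (edist_ne_top _ _)]
    _ = ∫⁻ _ in Ioo a b, edist (f a) (f b) / edist a b := (setLIntegral_const _ _).symm
    _ ≤ ∫⁻ x in Ioo a b, locSlope f x :=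
        setLIntegral_mono' measurableSet_Ioo fun x hx => ENNReal.div_le_of_le_mul (hslope x hx)

theorem totalVar_le_strongNorm (f : ℝ → ℝ) : totalVar f ≤ strongNorm f := by
  refine iSup_le fun ⟨n, u, hu, hus⟩ => ?_
  have hdisj : (↑(Finset.range n) : Set ℕ).PairwiseDisjoint fun i => Ioo (u i) (u (i + 1)) :=
    hu.pairwise_disjoint_on_Ioo_succ.set_pairwise _
  calc ∑ i ∈ Finset.range n, edist (f (u (i + 1))) (f (u i))
      ≤ ∑ i ∈ Finset.range n, ∫⁻ x in Ioo (u i) (u (i + 1)), locSlope f x := by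
        refine Finset.sum_le_sum fun i _ => ?_
        rcases (hu i.le_succ).eq_or_lt with h | h
        · simp [h]
        · rw [edist_comm]
          exact edist_le_setLIntegral_locSlope f (hus i) (hus (i + 1)) h
    _ = ∫⁻ x in ⋃ i ∈ Finset.range n, Ioo (u i) (u (i + 1)), locSlope f x :=
        (lintegral_biUnion_finset hdisj (fun _ _ => measurableSet_Ioo) _).symm
    _ ≤ strongNorm f := lintegral_mono_set <| iUnion₂_subset fun i _ =>
        Ioo_subset_Icc_self.trans (Icc_subset_Icc (hus i).1 (hus (i + 1)).2)

section IntervalCovering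

variable {ι : Type*} [DecidableEq ι] {P Q : ι → ℝ}

theorem exists_greedy_Ioo_step (s : Finset ι) {e : ℝ} (he : ∃ i ∈ s, e < Q i) :
    ∃ J ∈ s, ∃ m, e ≤ m ∧ P J ≤ m ∧ e < Q J ∧
      (⋃ i ∈ s, Ioo (P i) (Q i)) \ Iic e ⊆
        Ioc m (Q J) ∪ (⋃ i ∈ s.erase J, Ioo (P i) (Q i)) \ Iic (Q J) ∧
      ∀ i ∈ s.erase J, m ≤ P i ∨ Q i ≤ Q J := by
  classical
  set D := s.filter (e < Q ·)
  obtain ⟨i₀, hi₀, hmin⟩ := D.exists_min_image P (by simpa [D, Finset.Nonempty] using he)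
  set m := max e (P i₀)
  obtain ⟨J, hJ, hmax⟩ :=
    (D.filter (P · ≤ m)).exists_max_image Q ⟨i₀, by simp [hi₀, m]⟩
  simp only [D, Finset.mem_filter] at hJ hmax hmin
  refine ⟨J, hJ.1.1, m, le_max_left _ _, hJ.2, hJ.1.2, ?_, ?_⟩
  · rintro z ⟨hz, hze⟩
    simp only [mem_iUnion, mem_Ioo, mem_Iic, not_le] at hz hze
    obtain ⟨i, hi, hPz, hzQ⟩ := hz
    by_cases hzJ : z ≤ Q J
    · exact .inl ⟨max_lt hze ((hmin i ⟨hi, hze.trans hzQ⟩).trans_lt hPz), hzJ⟩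
    · have hiJ : i ≠ J := fun hiJ => hzJ (hiJ ▸ hzQ.le)
      exact .inr ⟨mem_iUnion₂.2 ⟨i, Finset.mem_erase.2 ⟨hiJ, hi⟩, hPz, hzQ⟩, hzJ⟩
  · intro i hi
    rw [or_iff_not_imp_left, not_le]
    intro hPi
    by_cases hQi : e < Q i
    · exact hmax i ⟨⟨(Finset.mem_erase.1 hi).2, hQi⟩, hPi.le⟩
    · exact (not_lt.1 hQi).trans hJ.1.2.le

variable {F : ℝ → ℝ≥0∞} {c : ℝ≥0∞}

/-- Induction along the greedy selection: `e₂` marks how far the union has been covered and `e₁`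
bounds the left ends of the intervals reaching beyond it. A selected interval may overlap the
previous one, hence two copies of `F`; each step charges the selected interval `J` to `F e₁` and
passes `(m, Q J)` on as `(e₁, e₂)`. -/
theorem mul_volume_biUnion_Ioo_diff_Iic_le (hF : Antitone F) (s : Finset ι)
    (hPQ : ∀ i ∈ s, c * ENNReal.ofReal (Q i - P i) + F (Q i) ≤ F (P i)) {e₁ e₂ : ℝ}
    (hs : ∀ i ∈ s, e₁ ≤ P i ∨ Q i ≤ e₂) :
    c * volume ((⋃ i ∈ s, Ioo (P i) (Q i)) \ Iic e₂) ≤ F e₁ + F e₂ := by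
  induction s using Finset.strongInduction generalizing e₁ e₂ with
  | H s ih =>
  by_cases he : ∃ i ∈ s, e₂ < Q i
  swap
  · push Not at he
    have : (⋃ i ∈ s, Ioo (P i) (Q i)) \ Iic e₂ = ∅ := sdiff_eq_empty.2 <|
      iUnion₂_subset fun i hi =>
        Ioo_subset_Iio_self.trans (Iio_subset_Iic_self.trans (Iic_subset_Iic.2 (he i hi)))
    simp [this]
  obtain ⟨J, hJ, m, hem, hPJ, hQJ, hcover, hrest⟩ := exists_greedy_Ioo_step s he
  have he₁ : e₁ ≤ P J := (hs J hJ).resolve_right hQJ.not_ge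
  have hIH :=
    ih _ (Finset.erase_ssubset hJ) (fun i hi => hPQ i (Finset.mem_of_mem_erase hi)) hrest
  calc c * volume ((⋃ i ∈ s, Ioo (P i) (Q i)) \ Iic e₂)
      ≤ c * (ENNReal.ofReal (Q J - m) +
          volume ((⋃ i ∈ s.erase J, Ioo (P i) (Q i)) \ Iic (Q J))) := by
        rw [← Real.volume_Ioc]
        gcongr
        exact (measure_mono hcover).trans (measure_union_le _ _)
    _ ≤ c * ENNReal.ofReal (Q J - P J) + (F m + F (Q J)) := by
        rw [mul_add]
        gcongr
    _ = (c * ENNReal.ofReal (Q J - P J) + F (Q J)) + F m := by ring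
    _ ≤ F e₁ + F e₂ := add_le_add ((hPQ J hJ).trans (hF he₁)) (hF hem)

theorem mul_volume_biUnion_Ioo_le (hF : Antitone F) (s : Finset ι)
    (hPQ : ∀ i ∈ s, c * ENNReal.ofReal (Q i - P i) + F (Q i) ≤ F (P i)) {e : ℝ}
    (he : ∀ i ∈ s, e ≤ P i) :
    c * volume (⋃ i ∈ s, Ioo (P i) (Q i)) ≤ 2 * F e := by
  have hdisj : (⋃ i ∈ s, Ioo (P i) (Q i)) \ Iic e = ⋃ i ∈ s, Ioo (P i) (Q i) :=
    sdiff_eq_left.2 <| disjoint_left.2 fun z hz hze => by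
      obtain ⟨i, hi, hz⟩ := mem_iUnion₂.1 hz
      exact (he i hi).not_gt (hz.1.trans_le hze)
  simpa [hdisj, two_mul] using
    mul_volume_biUnion_Ioo_diff_Iic_le hF s hPQ (e₁ := e) (e₂ := e) fun i hi => .inl (he i hi)

end IntervalCovering

theorem countable_diff_biUnion_Ioo {α : Type*} [LinearOrder α] [TopologicalSpace α]
    [OrderTopology α] [SecondCountableTopology α] {S : Set α} {P Q : α → α}
    (hP : ∀ x ∈ S, P x ≤ x) (hQ : ∀ x ∈ S, x ≤ Q x) (hPQ : ∀ x ∈ S, P x < Q x) :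
    (S \ ⋃ x ∈ S, Ioo (P x) (Q x)).Countable := by
  set R := S \ ⋃ x ∈ S, Ioo (P x) (Q x)
  -- an uncovered point is an endpoint of its own interval, which contains no uncovered point,
  -- so it is isolated on one side in `R`
  have hR : ∀ x ∈ R, ∀ z ∈ R, z ∉ Ioo (P x) (Q x) := fun x hx z hz hzx =>
    hz.2 (mem_iUnion₂.2 ⟨x, hx.1, hzx⟩)
  refine (countable_setOfPred_isolated_right_within (s := R)).union
    (countable_setOfPred_isolated_left_within (s := R)) |>.mono fun x hx => ?_
  rcases (hP x hx.1).eq_or_lt with hPx | hPx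
  · refine .inl ⟨hx, Filter.empty_mem_iff_bot.1 <| mem_nhdsWithin.2
      ⟨Iio (Q x), isOpen_Iio, hPx.symm.trans_lt (hPQ x hx.1),
        fun z ⟨hzQ, hzR, hxz⟩ => ?_⟩⟩
    exact hR x hx z hzR ⟨hPx.trans_lt hxz, hzQ⟩
  · have hQx : x = Q x :=
      (hQ x hx.1).eq_of_not_lt fun hxQ => hR x hx x hx ⟨hPx, hxQ⟩
    refine .inr ⟨hx, Filter.empty_mem_iff_bot.1 <| mem_nhdsWithin.2
      ⟨Ioi (P x), isOpen_Ioi, hPx, fun z ⟨hPz, hzR, hzx⟩ => ?_⟩⟩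
    exact hR x hx z hzR ⟨hPz, hQx ▸ hzx⟩

theorem measure_biUnion_eq_iSup_finset_of_isOpen {X ι : Type*} [TopologicalSpace X]
    [MeasurableSpace X] [OpensMeasurableSpace X] (μ : Measure X) [μ.Regular] {S : Set ι}
    {U : ι → Set X} (hU : ∀ i ∈ S, IsOpen (U i)) :
    μ (⋃ i ∈ S, U i) = ⨆ (s : Finset ι) (_ : ↑s ⊆ S), μ (⋃ i ∈ s, U i) := by
  refine le_antisymm (le_of_forall_lt fun r hr => ?_)
    (iSup₂_le fun s hs => measure_mono (biUnion_subset_biUnion_left hs))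
  obtain ⟨K, hKU, hK, hrK⟩ := (isOpen_biUnion hU).exists_lt_isCompact hr
  obtain ⟨s, hsS, hs, hKs⟩ := hK.elim_finite_subcover_image hU hKU
  refine hrK.trans_le (le_iSup₂_of_le hs.toFinset (by simpa using hsS) (measure_mono ?_))
  simpa using hKs

theorem mul_volume_setOf_lt_locSlope_le (f : ℝ → ℝ) (c : ℝ≥0∞) :
    c * volume {x ∈ Icc (0:ℝ) 1 | c < locSlope f x} ≤ 2 * totalVar f := by
  set E := {x ∈ Icc (0:ℝ) 1 | c < locSlope f x}
  choose! y hy hyx hlt using fun x (hx : x ∈ E) => exists_mul_edist_lt_of_lt_locSlope f hx.2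
  set P := fun x => min x (y x)
  set Q := fun x => max x (y x)
  have hvar : ∀ x ∈ E, c * ENNReal.ofReal (Q x - P x) + eVariationOn f (Icc (Q x) 1)
      ≤ eVariationOn f (Icc (P x) 1) := fun x hx => by
    have hsplit : eVariationOn f (Icc (P x) (Q x)) + eVariationOn f (Icc (Q x) 1)
        = eVariationOn f (Icc (P x) 1) := by
      simpa using eVariationOn.Icc_add_Icc f (s := univ) min_le_max (max_le hx.1.2 (hy x hx).2)
        (mem_univ _)
    have hlen : ENNReal.ofReal (Q x - P x) = edist x (y x) := by
      rw [edist_dist, Real.dist_eq, max_sub_min_eq_abs']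
    rw [← hsplit, hlen]
    gcongr
    exact (hlt x hx).le.trans (eVariationOn.edist_le f ⟨min_le_left _ _, le_max_left _ _⟩
      ⟨min_le_right _ _, le_max_right _ _⟩)
  have hE : volume E ≤ volume (⋃ x ∈ E, Ioo (P x) (Q x)) :=
    measure_mono_ae <| ae_le_set.2 <| Countable.measure_zero (countable_diff_biUnion_Ioo
      (fun x _ => min_le_left _ _) (fun x _ => le_max_left _ _)
      (fun x hx => min_lt_max.2 (hyx x hx).symm)) _
  calc c * volume E ≤ c * volume (⋃ x ∈ E, Ioo (P x) (Q x)) := by gcongr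
    _ = ⨆ (s : Finset ℝ) (_ : ↑s ⊆ E), c * volume (⋃ x ∈ s, Ioo (P x) (Q x)) := by
        simp only [measure_biUnion_eq_iSup_finset_of_isOpen volume (fun _ _ => isOpen_Ioo),
          ENNReal.mul_iSup]
    _ ≤ 2 * totalVar f := iSup₂_le fun s hs =>
        mul_volume_biUnion_Ioo_le (fun a b hab => eVariationOn.mono f (Icc_subset_Icc_left hab)) s
          (fun x hx => hvar x (hs hx)) fun x hx => le_min (hs hx).1.1 (hy x (hs hx)).1

/-- For every `f : [0,1] → ℝ`, `(1/2)·‖f‖_w ≤ V(f) ≤ ‖f‖_s`. -/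
theorem weak_le_two_var_and_var_le_strong (f : ℝ → ℝ) :
    weakNorm f / 2 ≤ totalVar f ∧ totalVar f ≤ strongNorm f := by
  refine ⟨?_, totalVar_le_strongNorm f⟩
  rw [ENNReal.div_le_iff two_ne_zero ofNat_ne_top, mul_comm]
  refine iSup₂_le fun t _ => ENNReal.mul_le_of_forall_lt fun a ha b hb => ?_
  calc a * b ≤ a * volume {x ∈ Icc (0:ℝ) 1 | a < locSlope f x} := by
        gcongr
        exact hb.le.trans (measure_mono fun x hx => ⟨hx.1, ha.trans_le hx.2⟩)
    _ ≤ 2 * totalVar f := mul_volume_setOf_lt_locSlope_le f a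
end

section
/- The bounded variation class is strictly contained in the weak average smoothness class: every f : [0,1] → ℝ with V(f) < ∞ satisfies ‖f‖_w < ∞, and there exists f : [0,1] → ℝ with ‖f‖_w < ∞ but V(f) = ∞. -/
open MeasureTheory Set ENNReal

open Function Filter OrderDual

/-! If `Λ_f(x) ≥ t`, some `y` has `|f x - f y| > (t/2)|x - y|`. Vitali's covering lemma picks
disjoint intervals `[x, y]` whose fourfold enlargements cover the level set, and `|f x - f y|` summed
over disjoint intervals is at most `V(f)`; hence `‖f‖_w ≤ 16 V(f)`.

Conversely `x sin(1/x)` has `Λ(x) ≤ 2/x` on `(0,1]`, so its level sets `{Λ ≥ t}` lie in `[0, 2/t]` and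
`‖·‖_w ≤ 2`; but it takes the values `±1/((k+1/2)π)` alternately, so its variation dominates the
harmonic series. -/

theorem sum_edist_le_eVariationOn_of_pairwiseDisjoint {ι : Type*} (f : ℝ → ℝ)
    {a b : ℝ} (p q : ι → ℝ) (s : Finset ι) (hsub : ∀ i ∈ s, uIcc (p i) (q i) ⊆ Icc a b)
    (hdisj : (s : Set ι).PairwiseDisjoint fun i => uIcc (p i) (q i)) :
    ∑ i ∈ s, edist (f (p i)) (f (q i)) ≤ eVariationOn f (Icc a b) := by
  classical
  induction s using Finset.strongInduction generalizing b with
  | _ s ih =>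
    rcases s.eq_empty_or_nonempty with rfl | hne
    · simp
    -- Peel off the interval lying furthest to the right; the others fit in `[a, min (p i₀) (q i₀)]`.
    obtain ⟨i₀, hi₀, hmax⟩ := s.exists_max_image (fun i => min (p i) (q i)) hne
    set m := min (p i₀) (q i₀)
    have ham : a ≤ m := (hsub i₀ hi₀ ⟨le_rfl, min_le_max⟩).1
    have hrest : ∀ j ∈ s.erase i₀, uIcc (p j) (q j) ⊆ Icc a m := by
      intro j hj
      obtain ⟨hjne, hjs⟩ := Finset.mem_erase.1 hj
      have hjm : max (p j) (q j) ≤ m := by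
        by_contra! h
        exact disjoint_left.1 (hdisj hjs hi₀ hjne) ⟨hmax j hjs, h.le⟩ ⟨le_rfl, min_le_max⟩
      exact Icc_subset_Icc (hsub j hjs ⟨le_rfl, min_le_max⟩).1 hjm
    calc ∑ i ∈ s, edist (f (p i)) (f (q i))
        = ∑ i ∈ s.erase i₀, edist (f (p i)) (f (q i)) + edist (f (p i₀)) (f (q i₀)) :=
          (Finset.sum_erase_add s _ hi₀).symm
      _ ≤ eVariationOn f (Icc a m) + eVariationOn f (uIcc (p i₀) (q i₀)) :=
          add_le_add (ih _ (Finset.erase_ssubset hi₀) hrest (hdisj.subset (by simp)))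
            (eVariationOn.edist_le f left_mem_uIcc right_mem_uIcc)
      _ = eVariationOn f (Icc a (max (p i₀) (q i₀))) := by
          rw [uIcc, ← eVariationOn.union f (isGreatest_Icc ham) (isLeast_Icc min_le_max),
            Icc_union_Icc_eq_Icc ham min_le_max]
      _ ≤ eVariationOn f (Icc a b) :=
          eVariationOn.mono f (Icc_subset_Icc le_rfl (hsub i₀ hi₀ ⟨min_le_max, le_rfl⟩).2)

theorem tsum_edist_le_eVariationOn_of_pairwise_disjoint {ι : Type*} (f : ℝ → ℝ) {a b : ℝ}
    (p q : ι → ℝ) (hsub : ∀ i, uIcc (p i) (q i) ⊆ Icc a b)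
    (hdisj : Pairwise (Disjoint on fun i => uIcc (p i) (q i))) :
    ∑' i, edist (f (p i)) (f (q i)) ≤ eVariationOn f (Icc a b) := by
  rw [ENNReal.tsum_eq_iSup_sum]
  exact iSup_le fun s =>
    sum_edist_le_eVariationOn_of_pairwiseDisjoint f p q s (fun i _ => hsub i) (hdisj.set_pairwise _)

theorem exists_pairwiseDisjoint_uIcc_volume_le_tsum (E : Set ℝ) (w : ℝ → ℝ) (R : ℝ)
    (hw : ∀ x ∈ E, w x ≠ x) (hR : ∀ x ∈ E, dist x (w x) ≤ R) :
    ∃ u ⊆ E, u.PairwiseDisjoint (fun x => uIcc x (w x)) ∧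
      volume E ≤ ∑' x : u, ENNReal.ofReal (8 * dist (x : ℝ) (w x)) := by
  have hpos : ∀ x ∈ E, 0 < dist x (w x) := fun x hx => dist_pos.2 (hw x hx).symm
  obtain ⟨u, huE, hdisj, hcov⟩ := Vitali.exists_disjoint_subfamily_covering_enlargement_closedBall
    E id (fun x => dist x (w x)) R hR 4 (by norm_num)
  have hu : u.Countable := hdisj.countable_of_nonempty_interior fun x hx => by
    have := hpos x (huE hx)
    simp only [id, Real.closedBall_eq_Icc, interior_Icc, nonempty_Ioo]
    linarith
  refine ⟨u, huE, hdisj.mono fun x =>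
    (convex_closedBall x _).ordConnected.uIcc_subset (Metric.mem_closedBall_self dist_nonneg)
      (Metric.mem_closedBall'.2 le_rfl), ?_⟩
  have hEcov : E ⊆ ⋃ x ∈ u, Metric.closedBall x (4 * dist x (w x)) := fun y hy => by
    obtain ⟨x, hx, hsub⟩ := hcov y hy
    exact mem_biUnion hx (hsub (Metric.mem_closedBall_self (hpos y hy).le))
  calc volume E ≤ ∑' x : u, volume (Metric.closedBall (x : ℝ) (4 * dist (x : ℝ) (w x))) :=
        (measure_mono hEcov).trans (measure_biUnion_le volume hu _)
    _ = ∑' x : u, ENNReal.ofReal (8 * dist (x : ℝ) (w x)) := by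
        simp only [Real.volume_closedBall]
        ring_nf

theorem exists_mul_dist_lt_of_ofReal_lt_locSlope {f : ℝ → ℝ} {x s : ℝ}
    (h : ENNReal.ofReal s < locSlope f x) :
    ∃ y ∈ Icc (0 : ℝ) 1, y ≠ x ∧ s * dist x y < dist (f x) (f y) := by
  simp only [locSlope, lt_iSup_iff] at h
  obtain ⟨y, hy, hne, hlt⟩ := h
  have hxy : 0 < dist x y := dist_pos.2 hne.symm
  refine ⟨y, hy, hne, ?_⟩
  rw [← lt_div_iff₀ hxy, Real.dist_eq, Real.dist_eq]
  exact (ENNReal.ofReal_lt_ofReal_iff'.1 hlt).1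

theorem mul_volume_locSlope_ge_le_totalVar (f : ℝ → ℝ) {t : ℝ} (ht : 0 < t) :
    ENNReal.ofReal t * volume {x ∈ Icc (0 : ℝ) 1 | ENNReal.ofReal t ≤ locSlope f x} ≤
      16 * totalVar f := by
  set E := {x ∈ Icc (0 : ℝ) 1 | ENNReal.ofReal t ≤ locSlope f x}
  have hw : ∀ x ∈ E, ∃ y ∈ Icc (0 : ℝ) 1, y ≠ x ∧ t / 2 * dist x y < dist (f x) (f y) :=
    fun x hx => exists_mul_dist_lt_of_ofReal_lt_locSlope
      (((ENNReal.ofReal_lt_ofReal_iff ht).2 (half_lt_self ht)).trans_le hx.2)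
  choose! w hwI hwne hwlt using hw
  obtain ⟨u, huE, hdisj, hvol⟩ := exists_pairwiseDisjoint_uIcc_volume_le_tsum E w 1 hwne
    fun x hx => Real.dist_le_of_mem_Icc_01 hx.1 (hwI x hx)
  have hvar : ∑' x : u, edist (f x) (f (w x)) ≤ totalVar f :=
    tsum_edist_le_eVariationOn_of_pairwise_disjoint f (↑) (w ∘ (↑))
      (fun x : u => uIcc_subset_Icc (huE x.2).1 (hwI x (huE x.2))) hdisj.subtype
  calc ENNReal.ofReal t * volume E
      ≤ ENNReal.ofReal t * ∑' x : u, ENNReal.ofReal (8 * dist (x : ℝ) (w x)) := by gcongr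
    _ = ∑' x : u, ENNReal.ofReal (16 * (t / 2 * dist (x : ℝ) (w x))) := by
        rw [← ENNReal.tsum_mul_left]
        congr with x
        rw [← ENNReal.ofReal_mul ht.le]
        ring_nf
    _ ≤ ∑' x : u, 16 * edist (f x) (f (w x)) := by
        refine ENNReal.tsum_le_tsum fun x => ?_
        rw [ENNReal.ofReal_mul (by norm_num), ENNReal.ofReal_ofNat, edist_dist]
        gcongr
        exact (hwlt x (huE x.2)).le
    _ = 16 * ∑' x : u, edist (f x) (f (w x)) := ENNReal.tsum_mul_left
    _ ≤ 16 * totalVar f := by gcongr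

theorem weakNorm_le_mul_totalVar (f : ℝ → ℝ) : weakNorm f ≤ 16 * totalVar f :=
  iSup₂_le fun _ ht => mul_volume_locSlope_ge_le_totalVar f ht

noncomputable def xSinInv (x : ℝ) : ℝ := x * Real.sin x⁻¹

theorem abs_xSinInv_sub_le {a b : ℝ} (ha : 0 ≤ a) (hab : a ≤ b) (hb : 0 < b) :
    |xSinInv b - xSinInv a| ≤ (1 + b⁻¹) * (b - a) := by
  have hsin : a * |Real.sin b⁻¹ - Real.sin a⁻¹| ≤ b⁻¹ * (b - a) := by
    rcases ha.eq_or_lt with rfl | ha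
    · simp [hb.ne']
    calc a * |Real.sin b⁻¹ - Real.sin a⁻¹| ≤ a * |b⁻¹ - a⁻¹| :=
          mul_le_mul_of_nonneg_left (Real.abs_sin_sub_sin_le _ _) ha.le
      _ = b⁻¹ * (b - a) := by
          rw [abs_of_nonpos (sub_nonpos.2 (inv_anti₀ ha hab))]
          field_simp
          ring
  have hsplit : xSinInv b - xSinInv a
      = (b - a) * Real.sin b⁻¹ + a * (Real.sin b⁻¹ - Real.sin a⁻¹) := by
    simp only [xSinInv]; ring
  calc |xSinInv b - xSinInv a|
      ≤ (b - a) * |Real.sin b⁻¹| + a * |Real.sin b⁻¹ - Real.sin a⁻¹| := by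
        rw [hsplit]
        refine (abs_add_le _ _).trans ?_
        rw [abs_mul, abs_mul, abs_of_nonneg (sub_nonneg.2 hab), abs_of_nonneg ha]
    _ ≤ (b - a) * 1 + b⁻¹ * (b - a) := by
        gcongr
        exact Real.abs_sin_le_one _
    _ = (1 + b⁻¹) * (b - a) := by ring

theorem abs_xSinInv_sub_le_of_pos {x y : ℝ} (hx : 0 < x) (hy : 0 ≤ y) :
    |xSinInv x - xSinInv y| ≤ (1 + x⁻¹) * |x - y| := by
  rcases le_total y x with hyx | hxy
  · rw [abs_of_nonneg (sub_nonneg.2 hyx)]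
    exact abs_xSinInv_sub_le hy hyx hx
  · rw [abs_sub_comm, abs_sub_comm x, abs_of_nonneg (sub_nonneg.2 hxy)]
    calc |xSinInv y - xSinInv x| ≤ (1 + y⁻¹) * (y - x) :=
          abs_xSinInv_sub_le hx.le hxy (hx.trans_le hxy)
      _ ≤ (1 + x⁻¹) * (y - x) := by
          gcongr

theorem locSlope_xSinInv_le {x : ℝ} (hx : x ∈ Ioc (0 : ℝ) 1) :
    locSlope xSinInv x ≤ ENNReal.ofReal (2 / x) := by
  refine iSup₂_le fun y hy => iSup_le fun hne => ENNReal.ofReal_le_ofReal ?_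
  have hxy : 0 < |x - y| := abs_pos.2 (sub_ne_zero.2 hne.symm)
  have hinv : 1 ≤ x⁻¹ := one_le_inv₀ hx.1 |>.2 hx.2
  rw [div_le_iff₀ hxy]
  calc |xSinInv x - xSinInv y| ≤ (1 + x⁻¹) * |x - y| := abs_xSinInv_sub_le_of_pos hx.1 hy.1
    _ ≤ 2 / x * |x - y| := by
        gcongr
        rw [div_eq_mul_inv]
        linarith

theorem weakNorm_le_of_locSlope_le_div {f : ℝ → ℝ} {C : ℝ} (hC : 0 ≤ C)
    (h : ∀ x ∈ Ioc (0 : ℝ) 1, locSlope f x ≤ ENNReal.ofReal (C / x)) :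
    weakNorm f ≤ ENNReal.ofReal C := by
  refine iSup₂_le fun t ht => ?_
  have hsub : {x ∈ Icc (0 : ℝ) 1 | ENNReal.ofReal t ≤ locSlope f x} ⊆ Icc 0 (C / t) := by
    rintro x ⟨hx, hxt⟩
    refine ⟨hx.1, ?_⟩
    rcases hx.1.eq_or_lt with rfl | hx0
    · positivity
    have htx : t ≤ C / x :=
      (ENNReal.ofReal_le_ofReal_iff (by positivity)).1 (hxt.trans (h x ⟨hx0, hx.2⟩))
    rw [le_div_iff₀ hx0] at htx
    rw [le_div_iff₀ ht]
    linarith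
  calc ENNReal.ofReal t * volume {x ∈ Icc (0 : ℝ) 1 | ENNReal.ofReal t ≤ locSlope f x}
      ≤ ENNReal.ofReal t * volume (Icc 0 (C / t)) := by gcongr
    _ = ENNReal.ofReal C := by
        rw [Real.volume_Icc, ← ENNReal.ofReal_mul ht.le]
        congr 1
        field_simp
        ring

theorem weakNorm_xSinInv_le : weakNorm xSinInv ≤ 2 := by
  simpa using weakNorm_le_of_locSlope_le_div zero_le_two fun x hx => locSlope_xSinInv_le hx

theorem eVariationOn_eq_top_of_antitone {α E : Type*} [LinearOrder α] [PseudoMetricSpace E]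
    {f : α → E} {s : Set α} {u : ℕ → α} (hu : Antitone u) (us : ∀ i, u i ∈ s)
    (hsum : Tendsto (fun n => ∑ i ∈ Finset.range n, dist (f (u (i + 1))) (f (u i))) atTop atTop) :
    eVariationOn f s = ⊤ := by
  have hle : ∀ n, ENNReal.ofReal (∑ i ∈ Finset.range n, dist (f (u (i + 1))) (f (u i))) ≤
      eVariationOn f s := fun n => by
    rw [ENNReal.ofReal_sum_of_nonneg fun _ _ => dist_nonneg]
    simp only [← edist_dist]
    exact (eVariationOn.sum_le (f := f ∘ ofDual) (u := toDual ∘ u) hu.dual_right us).trans_eq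
      (eVariationOn.comp_ofDual f s)
  exact top_le_iff.1 (le_of_tendsto' (ENNReal.tendsto_ofReal_atTop.comp hsum) hle)

open Real in
theorem xSinInv_inv_nat_add_half_mul_pi (k : ℕ) :
    xSinInv ((k + 1 / 2) * π)⁻¹ = (-1) ^ k * ((k + 1 / 2) * π)⁻¹ := by
  rw [xSinInv, inv_inv, show (k + 1 / 2) * π = π / 2 + k * π by ring, sin_add_nat_mul_pi,
    sin_pi_div_two]
  ring

open Real in
theorem totalVar_xSinInv : totalVar xSinInv = ⊤ := by
  set u : ℕ → ℝ := fun k => ((k + 1 / 2) * π)⁻¹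
  have hu_pos : ∀ k, 0 < u k := fun k => by positivity
  have hu : Antitone u := fun k m hkm => inv_anti₀ (by positivity) (by gcongr)
  have hu01 : ∀ k, u k ∈ Icc (0 : ℝ) 1 := fun k =>
    ⟨(hu_pos k).le, (hu k.zero_le).trans
      (inv_le_one_of_one_le₀ (by rw [Nat.cast_zero]; linarith [pi_gt_three]))⟩
  have hstep : ∀ k : ℕ, π⁻¹ * (1 / (k + 1)) ≤ dist (xSinInv (u (k + 1))) (xSinInv (u k)) := by
    intro k
    have hdiff : xSinInv (u (k + 1)) - xSinInv (u k) = -((-1) ^ k * (u (k + 1) + u k)) := by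
      simp only [u, xSinInv_inv_nat_add_half_mul_pi, pow_succ]
      ring
    rw [Real.dist_eq, hdiff, abs_neg, abs_mul, abs_pow, abs_neg, abs_one, one_pow, one_mul,
      abs_of_pos (add_pos (hu_pos _) (hu_pos _))]
    calc π⁻¹ * (1 / (k + 1)) ≤ u k := by
          rw [one_div, ← mul_inv]
          exact inv_anti₀ (by positivity) (by nlinarith [pi_pos])
      _ ≤ u (k + 1) + u k := le_add_of_nonneg_left (hu_pos _).le
  refine eVariationOn_eq_top_of_antitone hu hu01
    (tendsto_atTop_mono (fun n => Finset.sum_le_sum fun k _ => hstep k) ?_)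
  simp_rw [← Finset.mul_sum]
  exact Real.tendsto_sum_range_one_div_nat_succ_atTop.const_mul_atTop (by positivity)

/-- The BV class is strictly contained in the weak average smoothness class. -/
theorem BV_strictly_in_weak_class :
    (∀ f : ℝ → ℝ, totalVar f < ⊤ → weakNorm f < ⊤) ∧
    (∃ f : ℝ → ℝ, weakNorm f < ⊤ ∧ totalVar f = ⊤) :=
  ⟨fun f hf => (weakNorm_le_mul_totalVar f).trans_lt (ENNReal.mul_lt_top (by norm_num) hf),
    xSinInv, weakNorm_xSinInv_le.trans_lt ENNReal.ofNat_lt_top, totalVar_xSinInv⟩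
end

section
/- Covering lemma: for any finite sequence s_1, …, s_n of closed bounded intervals in ℝ, there exists a subset I ⊆ {1, …, n} such that the intervals {s_i : i ∈ I} are pairwise disjoint and Σ_{i ∈ I} λ(s_i) ≥ (1/2)·λ(⋃_{i=1}^n s_i), where λ denotes Lebesgue measure. -/
open MeasureTheory Set ENNReal

/-! Discard intervals until none is covered by the others. The survivors have distinct left
endpoints, and ordering them by left endpoint also orders their right endpoints; so if two survivors
that are not adjacent in this order met, every survivor between them would be covered by the two.
Hence the survivors of even rank are pairwise disjoint, and so are those of odd rank. Their lengths
add up to at least the measure of the union, so one of the two classes carries half of it. -/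

open scoped Finset

theorem Finset.exists_mem_between_of_even_card_filter_lt_iff {β : Type*} [LinearOrder β]
    {A : Finset β} {x y : β} (hx : x ∈ A) (hxy : x < y)
    (hpar : Even #(A.filter (· < x)) ↔ Even #(A.filter (· < y))) : ∃ z ∈ A, x < z ∧ z < y := by
  by_contra! hgap
  have hsucc : A.filter (· < y) = insert x (A.filter (· < x)) := by
    ext z
    simp only [Finset.mem_filter, Finset.mem_insert]
    constructor
    · rintro ⟨hz, hzy⟩
      rcases lt_trichotomy z x with h | h | h
      · exact Or.inr ⟨hz, h⟩
      · exact Or.inl h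
      · exact absurd hzy (hgap z hz h).not_gt
    · rintro (rfl | ⟨hz, hzx⟩)
      · exact ⟨hx, hxy⟩
      · exact ⟨hz, hzx.trans hxy⟩
  rw [hsucc, Finset.card_insert_of_notMem (by simp), Nat.even_add_one] at hpar
  exact iff_not_self hpar

def IsIrredundant {ι α : Type*} [DecidableEq ι] (s : ι → Set α) (T : Finset ι) : Prop :=
  ∀ j ∈ T, ¬ s j ⊆ ⋃ i ∈ T.erase j, s i

section Irredundant

variable {ι : Type*} [DecidableEq ι]

theorem exists_subset_isIrredundant_biUnion_eq {α : Type*} (s : ι → Set α) (S : Finset ι) :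
    ∃ T ⊆ S, IsIrredundant s T ∧ ⋃ i ∈ T, s i = ⋃ i ∈ S, s i := by
  obtain ⟨T, hT, hmin⟩ := (S.powerset.filter fun T => ⋃ i ∈ T, s i = ⋃ i ∈ S, s i).exists_min_image
    Finset.card ⟨S, by simp⟩
  rw [Finset.mem_filter, Finset.mem_powerset] at hT
  refine ⟨T, hT.1, fun j hj hcov => ?_, hT.2⟩
  have herase : ⋃ i ∈ T.erase j, s i = ⋃ i ∈ S, s i := by
    rw [← hT.2, ← Set.union_eq_self_of_subset_left hcov, ← Finset.set_biUnion_insert,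
      Finset.insert_erase hj]
  have := hmin (T.erase j) (Finset.mem_filter.2 ⟨Finset.mem_powerset.2
    ((Finset.erase_subset j T).trans hT.1), herase⟩)
  exact (Finset.card_erase_lt_of_mem hj).not_ge this

variable {a b : ι → ℝ} {T : Finset ι}

theorem IsIrredundant.not_Icc_subset (hT : IsIrredundant (fun i => Icc (a i) (b i)) T)
    {i j : ι} (hi : i ∈ T) (hj : j ∈ T) (hij : i ≠ j) : ¬ Icc (a j) (b j) ⊆ Icc (a i) (b i) :=
  fun h => hT j hj <| h.trans <|
    Finset.subset_set_biUnion_of_mem (f := fun i => Icc (a i) (b i)) (Finset.mem_erase.2 ⟨hij, hi⟩)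

theorem IsIrredundant.injOn_left (hT : IsIrredundant (fun i => Icc (a i) (b i)) T) :
    Set.InjOn a T := by
  intro i hi j hj ha
  by_contra hij
  rcases le_total (b i) (b j) with hb | hb
  · exact hT.not_Icc_subset hj hi (Ne.symm hij) (Icc_subset_Icc ha.ge hb)
  · exact hT.not_Icc_subset hi hj hij (Icc_subset_Icc ha.le hb)

theorem IsIrredundant.right_lt_of_left_lt (hT : IsIrredundant (fun i => Icc (a i) (b i)) T)
    {i j : ι} (hi : i ∈ T) (hj : j ∈ T) (ha : a i < a j) : b i < b j := by
  by_contra! hb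
  exact hT.not_Icc_subset hi hj (fun h => ha.ne (congrArg a h)) (Icc_subset_Icc ha.le hb)

theorem IsIrredundant.disjoint_of_lt_of_lt (hT : IsIrredundant (fun i => Icc (a i) (b i)) T)
    {i j k : ι} (hi : i ∈ T) (hj : j ∈ T) (hk : k ∈ T) (hij : a i < a j) (hjk : a j < a k) :
    Disjoint (Icc (a i) (b i)) (Icc (a k) (b k)) := by
  refine Set.disjoint_left.2 fun x hxi hxk => hT j hj fun y hy => ?_
  rcases le_or_gt y (b i) with hyi | hyi
  · exact Finset.subset_set_biUnion_of_mem (f := fun i => Icc (a i) (b i))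
      (Finset.mem_erase.2 ⟨fun h => hij.ne (congrArg a h), hi⟩)
      (show y ∈ Icc (a i) (b i) from ⟨hij.le.trans hy.1, hyi⟩)
  · exact Finset.subset_set_biUnion_of_mem (f := fun i => Icc (a i) (b i))
      (Finset.mem_erase.2 ⟨fun h => hjk.ne (congrArg a h).symm, hk⟩)
      (show y ∈ Icc (a k) (b k) from
        ⟨hxk.1.trans (hxi.2.trans hyi.le), hy.2.trans (hT.right_lt_of_left_lt hj hk hjk).le⟩)

theorem IsIrredundant.disjoint_of_even_iff (hT : IsIrredundant (fun i => Icc (a i) (b i)) T)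
    {i j : ι} (hi : i ∈ T) (hj : j ∈ T) (hij : i ≠ j)
    (hpar : Even #((T.image a).filter (· < a i)) ↔ Even #((T.image a).filter (· < a j))) :
    Disjoint (Icc (a i) (b i)) (Icc (a j) (b j)) := by
  have between {i j : ι} (hi : i ∈ T) (hj : j ∈ T) (ha : a i < a j)
      (hpar : Even #((T.image a).filter (· < a i)) ↔ Even #((T.image a).filter (· < a j))) :
      Disjoint (Icc (a i) (b i)) (Icc (a j) (b j)) := by
    obtain ⟨_, hmem, hik, hkj⟩ := Finset.exists_mem_between_of_even_card_filter_lt_iff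
      (Finset.mem_image_of_mem a hi) ha hpar
    obtain ⟨k, hk, rfl⟩ := Finset.mem_image.1 hmem
    exact hT.disjoint_of_lt_of_lt hi hk hj hik hkj
  rcases (hT.injOn_left.ne hi hj hij).lt_or_gt with ha | ha
  · exact between hi hj ha hpar
  · exact (between hj hi ha hpar.symm).symm

end Irredundant

theorem ENNReal.half_le_sum_filter_or_half_le_sum_filter_not {ι : Type*} (T : Finset ι)
    (p : ι → Prop) [DecidablePred p] (g : ι → ℝ≥0∞) :
    (∑ i ∈ T, g i) / 2 ≤ ∑ i ∈ T.filter p, g i ∨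
      (∑ i ∈ T, g i) / 2 ≤ ∑ i ∈ T.filter (¬ p ·), g i := by
  rw [← Finset.sum_filter_add_sum_filter_not T p]
  rcases le_total (∑ i ∈ T.filter p, g i) (∑ i ∈ T.filter (¬ p ·), g i) with h | h
  · exact Or.inr (ENNReal.div_le_of_le_mul (by rw [mul_two]; gcongr))
  · exact Or.inl (ENNReal.div_le_of_le_mul (by rw [mul_two]; gcongr))

theorem covering_lemma_general (n : ℕ) (a b : Fin n → ℝ) :
    ∃ I : Finset (Fin n),
      ((I : Set (Fin n)).Pairwise fun i j =>
        Disjoint (Set.Icc (a i) (b i)) (Set.Icc (a j) (b j))) ∧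
      volume (⋃ i, Set.Icc (a i) (b i)) / 2 ≤ ∑ i ∈ I, volume (Set.Icc (a i) (b i)) := by
  obtain ⟨T, -, hT, hunion⟩ := exists_subset_isIrredundant_biUnion_eq (fun i => Icc (a i) (b i))
    Finset.univ
  have hcover : volume (⋃ i, Icc (a i) (b i)) ≤ ∑ i ∈ T, volume (Icc (a i) (b i)) := by
    rw [show ⋃ i, Icc (a i) (b i) = ⋃ i ∈ T, Icc (a i) (b i) by simp [hunion]]
    exact measure_biUnion_finset_le _ _
  set rankEven : Fin n → Prop := fun i => Even #((T.image a).filter (· < a i))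
  have hdisj {I : Finset (Fin n)} (hIT : I ⊆ T)
      (hpar : ∀ i ∈ I, ∀ j ∈ I, rankEven i ↔ rankEven j) : (I : Set (Fin n)).Pairwise
      fun i j => Disjoint (Icc (a i) (b i)) (Icc (a j) (b j)) :=
    fun i hi j hj hij => hT.disjoint_of_even_iff (hIT hi) (hIT hj) hij (hpar i hi j hj)
  rcases ENNReal.half_le_sum_filter_or_half_le_sum_filter_not T rankEven
    (fun i => volume (Icc (a i) (b i))) with h | h
  · refine ⟨_, hdisj (Finset.filter_subset _ T) fun i hi j hj => ?_,
      (ENNReal.div_le_div_right hcover 2).trans h⟩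
    exact iff_of_true (Finset.mem_filter.1 hi).2 (Finset.mem_filter.1 hj).2
  · refine ⟨_, hdisj (Finset.filter_subset _ T) fun i hi j hj => ?_,
      (ENNReal.div_le_div_right hcover 2).trans h⟩
    exact iff_of_false (Finset.mem_filter.1 hi).2 (Finset.mem_filter.1 hj).2

/-- Covering lemma: from any finite family of closed bounded intervals one can choose a
pairwise disjoint subfamily whose total length is at least half the measure of the union. -/
theorem covering_lemma (n : ℕ) (a b : Fin n → ℝ) (hab : ∀ i, a i ≤ b i) :
    ∃ I : Finset (Fin n),
      ((I : Set (Fin n)).Pairwise fun i j =>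
        Disjoint (Set.Icc (a i) (b i)) (Set.Icc (a j) (b j))) ∧
      volume (⋃ i, Set.Icc (a i) (b i)) / 2 ≤ ∑ i ∈ I, volume (Set.Icc (a i) (b i)) :=
  covering_lemma_general n a b
end

section
/- Reduction to right-continuous monotone functions: if ‖g‖_w ≤ 2·V(g) holds for every nondecreasing, right-continuous function g : [0,1] → ℝ, then ‖f‖_w ≤ 2·V(f) holds for every function f : [0,1] → ℝ. -/
open MeasureTheory Set ENNReal

/-!
Let `v(x) = V(f; [0, x])`, which dominates every increment of `f`: `|f b - f a| ≤ v b - v a`.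
The right limit `G` of a monotone `w ≤ v` is nondecreasing and right-continuous, and `G = w`
off a countable set. At such points `x` the slopes of `f` are dominated by those of `G`: to the
right of `x` directly, since `G ≥ w`; to the left, `G y ≤ w z ≤ v z` for `y < z`, so the slope of
`f` between `z` and `x` is a limit of slopes of `G` between `y ↑ z` and `x`. This limit argument
fails at `z = 0`, where `v` may jump; taking `w = v` on `[ε, ∞)` and `w = 0` before makes
`G 0 = 0`, at the price of the set `[0, ε]` of measure `ε` in every level set of `Λ_f`.
-/

open Filter Topology

theorem ofReal_div_le_locSlope {g : ℝ → ℝ} {x y c : ℝ} (hy : y ∈ Icc 0 1) (hyx : y ≠ x)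
    (hc : c ≤ |g x - g y|) : ENNReal.ofReal (c / |x - y|) ≤ locSlope g x :=
  (ENNReal.ofReal_le_ofReal (by gcongr)).trans <| le_iSup₂_of_le y hy <| le_iSup_of_le hyx le_rfl

theorem ofReal_div_le_locSlope_of_eventually_lt {g : ℝ → ℝ} {x z c : ℝ} (hz : z ∈ Ioc 0 1)
    (hxz : x ≠ z) (hc : ∀ᶠ y in 𝓝[<] z, c ≤ |g x - g y|) :
    ENNReal.ofReal (c / |x - z|) ≤ locSlope g x := by
  have hlim : Tendsto (fun y => ENNReal.ofReal (c / |x - y|)) (𝓝[<] z)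
      (𝓝 (ENNReal.ofReal (c / |x - z|))) :=
    ((ENNReal.continuous_ofReal.tendsto _).comp <| tendsto_const_nhds.div
      ((continuous_const.sub continuous_id).abs.tendsto z) (abs_ne_zero.2 (sub_ne_zero.2 hxz))
      ).mono_left nhdsWithin_le_nhds
  refine le_of_tendsto hlim ?_
  filter_upwards [Ioo_mem_nhdsLT hz.1, hc, nhdsWithin_le_nhds (eventually_ne_nhds hxz.symm)]
    with y hy hcy hyx
  exact ofReal_div_le_locSlope ⟨hy.1.le, hy.2.le.trans hz.2⟩ hyx hcy

theorem locSlope_le_locSlope {f v g : ℝ → ℝ} {x : ℝ} (hx : x ∈ Icc 0 1)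
    (hfv : ∀ a b, 0 ≤ a → a ≤ b → b ≤ 1 → |f b - f a| ≤ v b - v a)
    (hgx : g x = v x) (hg0 : g 0 ≤ v 0) (hleft : ∀ y z, y < z → g y ≤ v z)
    (hright : ∀ y, x < y → v y ≤ g y) : locSlope f x ≤ locSlope g x := by
  refine iSup₂_le fun y hy => iSup_le fun hyx => ?_
  rcases hyx.lt_or_gt with hlt | hgt
  · have hf : |f x - f y| / |x - y| ≤ (v x - v y) / |x - y| := by
      gcongr; exact hfv y x hy.1 hlt.le hx.2
    refine (ENNReal.ofReal_le_ofReal hf).trans ?_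
    rcases hy.1.eq_or_lt with rfl | hy0
    · exact ofReal_div_le_locSlope hy hyx (by linarith [le_abs_self (g x - g 0)])
    · refine ofReal_div_le_locSlope_of_eventually_lt ⟨hy0, hy.2⟩ hyx.symm ?_
      filter_upwards [self_mem_nhdsWithin] with z (hz : z < y)
      linarith [hleft z y hz, le_abs_self (g x - g z)]
  · have hf : |f x - f y| / |x - y| ≤ (v y - v x) / |x - y| := by
      gcongr; rw [abs_sub_comm]; exact hfv x y hx.1 hgt.le hy.2
    refine (ENNReal.ofReal_le_ofReal hf).trans (ofReal_div_le_locSlope hy hyx ?_)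
    linarith [hright y hgt, neg_abs_le (g x - g y)]

theorem Monotone.countable_rightLim_ne {α : Type*} [LinearOrder α] [TopologicalSpace α]
    [OrderTopology α] {f : α → ℝ} (hf : Monotone f) :
    {x | Function.rightLim f x ≠ f x}.Countable :=
  hf.countable_not_continuousAt.mono fun _ hx hc =>
    hx (hf.continuousWithinAt_Ioi_iff_rightLim_eq.1 (ContinuousAt.continuousWithinAt hc))

theorem Monotone.indicator_Ici {α β : Type*} [Preorder α] [Preorder β] [Zero β] {f : α → β}
    (hf : Monotone f) (h0 : 0 ≤ f) (a : α) :
    Monotone ((Ici a).indicator f) := by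
  intro x y hxy
  by_cases hx : a ≤ x
  · rw [indicator_of_mem (mem_Ici.2 hx), indicator_of_mem (mem_Ici.2 (hx.trans hxy))]
    exact hf hxy
  · rw [indicator_of_notMem (fun h => hx (mem_Ici.1 h))]
    exact indicator_nonneg (fun z _ => h0 z) y

noncomputable def variationFun (f : ℝ → ℝ) : ℝ → ℝ :=
  IccExtend zero_le_one fun x => variationOnFromTo f (Icc 0 1) 0 x

namespace variationFun

theorem nonneg (f : ℝ → ℝ) (x : ℝ) : 0 ≤ variationFun f x :=
  variationOnFromTo.nonneg_of_le _ _ (projIcc 0 1 zero_le_one x).2.1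

theorem zero (f : ℝ → ℝ) : variationFun f 0 = 0 := by
  rw [variationFun, IccExtend_left, variationOnFromTo.self]

theorem monotone {f : ℝ → ℝ} (hf : BoundedVariationOn f (Icc 0 1)) : Monotone (variationFun f) :=
  Monotone.IccExtend _ fun a b hab =>
    variationOnFromTo.monotoneOn hf.locallyBoundedVariationOn (left_mem_Icc.2 zero_le_one)
      a.2 b.2 hab

theorem le_eVariationOn (f : ℝ → ℝ) (x : ℝ) :
    ENNReal.ofReal (variationFun f x) ≤ eVariationOn f (Icc 0 1) := by
  change ENNReal.ofReal (variationOnFromTo f (Icc 0 1) 0 (projIcc 0 1 zero_le_one x)) ≤ _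
  rw [variationOnFromTo.eq_of_le _ _ (projIcc 0 1 zero_le_one x).2.1]
  exact ENNReal.ofReal_toReal_le.trans (eVariationOn.mono f inter_subset_left)

theorem abs_sub_le {f : ℝ → ℝ} (hf : BoundedVariationOn f (Icc 0 1)) (a b : ℝ) (ha : 0 ≤ a)
    (hab : a ≤ b) (hb : b ≤ 1) : |f b - f a| ≤ variationFun f b - variationFun f a := by
  rw [variationFun, IccExtend_of_mem _ _ ⟨ha, hab.trans hb⟩,
    IccExtend_of_mem _ _ ⟨ha.trans hab, hb⟩]
  exact variationOnFromTo.abs_sub_le_sub_of_le hf.locallyBoundedVariationOn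
    (left_mem_Icc.2 zero_le_one) ⟨ha, hab.trans hb⟩ ⟨ha.trans hab, hb⟩ hab

end variationFun

theorem exists_stieltjesFunction_locSlope_le {f : ℝ → ℝ} (hf : BoundedVariationOn f (Icc 0 1))
    {ε : ℝ} (hε : 0 < ε) :
    ∃ g : StieltjesFunction ℝ, totalVar g ≤ totalVar f ∧ ∃ E : Set ℝ,
      volume E ≤ ENNReal.ofReal ε ∧ ∀ x ∈ Icc 0 1 \ E, locSlope f x ≤ locSlope g x := by
  set w := (Ici ε).indicator (variationFun f)
  have hw : Monotone w := (variationFun.monotone hf).indicator_Ici (variationFun.nonneg f) ε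
  have hwv : w ≤ variationFun f := indicator_le_self' fun x _ => variationFun.nonneg f x
  refine ⟨hw.stieltjesFunction, ?_, Icc 0 ε ∪ {x | Function.rightLim w x ≠ w x}, ?_, ?_⟩
  · have hg0 : 0 ≤ Function.rightLim w 0 :=
      (indicator_nonneg (fun x _ => variationFun.nonneg f x) 0).trans (hw.le_rightLim le_rfl)
    have hgV := (hw.stieltjesFunction.mono.monotoneOn (Icc 0 1)).eVariationOn_eq
      (left_mem_Icc.2 zero_le_one) (right_mem_Icc.2 zero_le_one)
    rw [inter_self] at hgV
    calc totalVar hw.stieltjesFunction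
        = ENNReal.ofReal (Function.rightLim w 1 - Function.rightLim w 0) := hgV
      _ ≤ ENNReal.ofReal (variationFun f 2) := by
          gcongr
          linarith [hw.rightLim_le one_lt_two, hwv 2]
      _ ≤ totalVar f := variationFun.le_eVariationOn f 2
  · calc volume (Icc 0 ε ∪ {x | Function.rightLim w x ≠ w x})
        ≤ volume (Icc 0 ε) + 0 :=
          (measure_union_le _ _).trans_eq (by rw [hw.countable_rightLim_ne.measure_zero])
      _ = ENNReal.ofReal ε := by rw [add_zero, Real.volume_Icc, sub_zero]
  · rintro x ⟨hx, hxE⟩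
    simp only [mem_union, mem_Icc, mem_ofPred_eq, not_or, not_and, not_le, not_not] at hxE
    have hεx : ε < x := hxE.1 hx.1
    refine locSlope_le_locSlope hx (variationFun.abs_sub_le hf) ?_ ?_ ?_ ?_
    · rw [Monotone.stieltjesFunction_eq, hxE.2]
      exact indicator_of_mem (mem_Ici.2 hεx.le) _
    · rw [Monotone.stieltjesFunction_eq, variationFun.zero]
      refine (hw.rightLim_le (half_pos hε)).trans_eq ?_
      exact indicator_of_notMem (notMem_Ici.2 (half_lt_self hε)) _
    · exact fun y z hyz => (hw.rightLim_le hyz).trans (hwv z)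
    · intro y hxy
      rw [Monotone.stieltjesFunction_eq,
        ← indicator_of_mem (mem_Ici.2 (hεx.trans hxy).le) (variationFun f)]
      exact hw.le_rightLim le_rfl

theorem weakNorm_le_of_forall_exists_locSlope_le {f : ℝ → ℝ} {C : ℝ≥0∞}
    (h : ∀ ε : ℝ, 0 < ε → ∃ g : ℝ → ℝ, weakNorm g ≤ C ∧ ∃ E : Set ℝ,
      volume E ≤ ENNReal.ofReal ε ∧ ∀ x ∈ Icc 0 1 \ E, locSlope f x ≤ locSlope g x) :
    weakNorm f ≤ C := by
  refine iSup₂_le fun t ht => ENNReal.le_of_forall_pos_le_add fun ε hε _ => ?_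
  obtain ⟨g, hg, E, hE, hfg⟩ := h (ε / t) (div_pos hε ht)
  have hsub : {x ∈ Icc (0 : ℝ) 1 | ENNReal.ofReal t ≤ locSlope f x} ⊆
      {x ∈ Icc (0 : ℝ) 1 | ENNReal.ofReal t ≤ locSlope g x} ∪ E := by
    rintro x ⟨hx, hxt⟩
    by_cases hxE : x ∈ E
    · exact Or.inr hxE
    · exact Or.inl ⟨hx, hxt.trans (hfg x ⟨hx, hxE⟩)⟩
  calc ENNReal.ofReal t * volume {x ∈ Icc (0 : ℝ) 1 | ENNReal.ofReal t ≤ locSlope f x}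
      ≤ ENNReal.ofReal t * volume {x ∈ Icc (0 : ℝ) 1 | ENNReal.ofReal t ≤ locSlope g x}
          + ENNReal.ofReal t * ENNReal.ofReal (ε / t) := by
        rw [← mul_add]
        gcongr
        exact (measure_mono hsub).trans ((measure_union_le _ _).trans (by gcongr))
    _ ≤ C + ε := by
        gcongr
        · exact (le_iSup₂_of_le t ht le_rfl).trans hg
        · rw [← ENNReal.ofReal_mul ht.le, mul_div_cancel₀ _ ht.ne', ENNReal.ofReal_coe_nnreal]

/-- Reduction to right-continuous monotone functions: if `‖g‖_w ≤ 2·V(g)` holds for every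
nondecreasing right-continuous `g : [0,1] → ℝ`, then it holds for every `f : [0,1] → ℝ`. -/
theorem reduction_to_rc_monotone
    (h : ∀ g : ℝ → ℝ, MonotoneOn g (Set.Icc 0 1) →
      (∀ x ∈ Set.Icc (0:ℝ) 1, ContinuousWithinAt g (Set.Icc x 1) x) →
      weakNorm g ≤ 2 * totalVar g) :
    ∀ f : ℝ → ℝ, weakNorm f ≤ 2 * totalVar f := by
  intro f
  rcases eq_or_ne (totalVar f) ⊤ with hV | hf
  · rw [hV, ENNReal.mul_top two_ne_zero]
    exact le_top
  refine weakNorm_le_of_forall_exists_locSlope_le fun ε hε => ?_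
  obtain ⟨g, hgf, E, hE, hfg⟩ := exists_stieltjesFunction_locSlope_le hf hε
  refine ⟨g, ?_, E, hE, hfg⟩
  calc weakNorm g
      ≤ 2 * totalVar g :=
        h g (g.mono.monotoneOn _) fun x _ => (g.right_continuous x).mono Icc_subset_Ici_self
    _ ≤ 2 * totalVar f := by gcongr
end

section
/- For a nondecreasing function f : [0,1] → ℝ that is right-continuous at 0, let f̃ : [0,1] → ℝ be its right-continuous modification, i.e. f̃(x) = lim_{ε→0^+} f(x+ε) for x < 1 and f̃(1) = f(1). Then V(f̃) = V(f), Λ_{f̃}(x) = Λ_f(x) at every point x at which f is right-continuous, and ‖f̃‖_w = ‖f‖_w. -/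
open MeasureTheory Set ENNReal

/-!
Since `f` is nondecreasing, `f x ≤ f̃ x ≤ f y` whenever `x < y`, so `f̃` is again
nondecreasing with the same endpoint values, hence the same variation. At a point `x` where
`f̃ x = f x`, every difference quotient of `f̃` at `x` is a limit of difference quotients of `f`
(approach `x'` from the right), and conversely a quotient of `f` is dominated by one of `f̃`
(to the right of `x`) or by a limit of them (approach `x'` from the left). Finally `f̃ = f`
off the countable set of points where `f` is not right-continuous, so the level sets of the two
local slopes differ by a null set.
-/

open Filter Topology

structure IsRightContinuousModification (f g : ℝ → ℝ) (a b : ℝ) : Prop where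
  tendsto : ∀ x ∈ Set.Ico a b, Tendsto f (𝓝[>] x) (𝓝 (g x))
  apply_right : g b = f b

namespace IsRightContinuousModification

variable {f g : ℝ → ℝ} {a b x y : ℝ}

theorem apply_le (hg : IsRightContinuousModification f g a b) (hf : MonotoneOn f (Icc a b))
    (hx : x ∈ Icc a b) : f x ≤ g x := by
  rcases hx.2.eq_or_lt with rfl | hxb
  · exact hg.apply_right.ge
  refine ge_of_tendsto (hg.tendsto x ⟨hx.1, hxb⟩) ?_
  filter_upwards [Ioo_mem_nhdsGT hxb] with y hy
  exact hf hx ⟨hx.1.trans hy.1.le, hy.2.le⟩ hy.1.le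

theorem le_apply (hg : IsRightContinuousModification f g a b) (hf : MonotoneOn f (Icc a b))
    (hx : a ≤ x) (hxy : x < y) (hy : y ≤ b) : g x ≤ f y := by
  refine le_of_tendsto (hg.tendsto x ⟨hx, hxy.trans_le hy⟩) ?_
  filter_upwards [Ioo_mem_nhdsGT hxy] with z hz
  exact hf ⟨hx.trans hz.1.le, hz.2.le.trans hy⟩ ⟨hx.trans hxy.le, hy⟩ hz.2.le

theorem monotoneOn (hg : IsRightContinuousModification f g a b) (hf : MonotoneOn f (Icc a b)) :
    MonotoneOn g (Icc a b) := by
  intro x hx y hy hxy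
  rcases hxy.eq_or_lt with rfl | hxy
  · rfl
  · exact (hg.le_apply hf hx.1 hxy hy.2).trans (hg.apply_le hf hy)

theorem eq_of_continuousWithinAt (hg : IsRightContinuousModification f g a b)
    (hx : x ∈ Icc a b) (hc : ContinuousWithinAt f (Icc x b) x) : g x = f x := by
  rcases hx.2.eq_or_lt with rfl | hxb
  · exact hg.apply_right
  · exact tendsto_nhds_unique (hg.tendsto x ⟨hx.1, hxb⟩)
      (hc.mono_of_mem_nhdsWithin (Icc_mem_nhdsGT hxb))

end IsRightContinuousModification

section LocSlope

variable {f g : ℝ → ℝ} {x x' v : ℝ}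

theorem le_locSlope (f : ℝ → ℝ) (hx' : x' ∈ Icc (0 : ℝ) 1) (hne : x' ≠ x) :
    ENNReal.ofReal (|f x - f x'| / |x - x'|) ≤ locSlope f x :=
  le_iSup₂_of_le x' hx' (le_iSup_of_le hne le_rfl)

theorem le_locSlope_of_tendsto {l : Filter ℝ} [l.NeBot] (hl : l ≤ 𝓝 x') (hne : x' ≠ x)
    (hmem : ∀ᶠ y in l, y ∈ Icc (0 : ℝ) 1) (hv : Tendsto f l (𝓝 v)) :
    ENNReal.ofReal (|f x - v| / |x - x'|) ≤ locSlope f x := by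
  have hquot : Tendsto (fun y ↦ ENNReal.ofReal (|f x - f y| / |x - y|)) l
      (𝓝 (ENNReal.ofReal (|f x - v| / |x - x'|))) :=
    ENNReal.tendsto_ofReal <| (tendsto_const_nhds.sub hv).abs.div
      (tendsto_const_nhds.sub (tendsto_id.mono_left hl)).abs (by simpa [sub_eq_zero] using hne.symm)
  refine le_of_tendsto hquot ?_
  filter_upwards [hmem, hl (eventually_ne_nhds hne)] with y hy hyx
  exact le_locSlope f hy hyx

namespace IsRightContinuousModification

theorem locSlope_le (hg : IsRightContinuousModification f g 0 1) (hgx : g x = f x) :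
    locSlope g x ≤ locSlope f x := by
  refine iSup₂_le fun x' hx' => iSup_le fun hne => ?_
  rcases hx'.2.eq_or_lt with rfl | hx'1
  · simpa only [hgx, hg.apply_right] using le_locSlope f hx' hne
  rw [hgx]
  refine le_locSlope_of_tendsto nhdsWithin_le_nhds hne ?_ (hg.tendsto x' ⟨hx'.1, hx'1⟩)
  filter_upwards [Ioo_mem_nhdsGT hx'1] with y hy
  exact ⟨hx'.1.trans hy.1.le, hy.2.le⟩

-- Approach `x'` from the left: there `g y ≤ f x'`, so the quotients of `g` dominate those of `f`.
theorem slope_left_le_locSlope (hg : IsRightContinuousModification f g 0 1)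
    (hf : MonotoneOn f (Icc 0 1)) (hx : x ≤ 1) (hgx : g x = f x) (hx' : 0 < x') (hx'x : x' < x) :
    ENNReal.ofReal ((f x - f x') / (x - x')) ≤ locSlope g x := by
  have hfx' : f x' ≤ f x := hf ⟨hx'.le, hx'x.le.trans hx⟩ ⟨hx'.le.trans hx'x.le, hx⟩ hx'x.le
  have hquot : Tendsto (fun y ↦ ENNReal.ofReal ((f x - f x') / (x - y))) (𝓝[<] x')
      (𝓝 (ENNReal.ofReal ((f x - f x') / (x - x')))) :=
    ENNReal.tendsto_ofReal <| tendsto_const_nhds.div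
      (tendsto_const_nhds.sub (tendsto_id.mono_left nhdsWithin_le_nhds)) (sub_ne_zero.2 hx'x.ne')
  refine le_of_tendsto hquot ?_
  filter_upwards [Ioo_mem_nhdsLT hx'] with y hy
  have hyx : y < x := hy.2.trans hx'x
  have hgy : g y ≤ f x' := hg.le_apply hf hy.1.le hy.2 (hx'x.le.trans hx)
  refine le_trans ?_ (le_locSlope g ⟨hy.1.le, hyx.le.trans hx⟩ hyx.ne)
  rw [hgx, abs_of_nonneg (sub_nonneg.2 (hgy.trans hfx')), abs_of_pos (sub_pos.2 hyx)]
  gcongr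

theorem locSlope_le_locSlope (hg : IsRightContinuousModification f g 0 1)
    (hf : MonotoneOn f (Icc 0 1)) (h0 : g 0 = f 0) (hx : x ∈ Icc (0 : ℝ) 1) (hgx : g x = f x) :
    locSlope f x ≤ locSlope g x := by
  refine iSup₂_le fun x' hx' => iSup_le fun hne => ?_
  rcases hne.lt_or_gt with hx'x | hxx'
  · rcases hx'.1.eq_or_lt with rfl | hx'0
    · simpa only [hgx, h0] using le_locSlope g hx' hne
    rw [abs_of_nonneg (sub_nonneg.2 (hf hx' hx hx'x.le)), abs_of_pos (sub_pos.2 hx'x)]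
    exact hg.slope_left_le_locSlope hf hx.2 hgx hx'0 hx'x
  · have hfx : f x ≤ f x' := hf hx hx' hxx'.le
    refine le_trans ?_ (le_locSlope g hx' hne)
    rw [hgx, abs_sub_comm (f x), abs_sub_comm (f x), abs_of_nonneg (sub_nonneg.2 hfx),
      abs_of_nonneg (sub_nonneg.2 (hfx.trans (hg.apply_le hf hx')))]
    gcongr
    exact hg.apply_le hf hx'

theorem locSlope_eq (hg : IsRightContinuousModification f g 0 1) (hf : MonotoneOn f (Icc 0 1))
    (h0 : g 0 = f 0) (hx : x ∈ Icc (0 : ℝ) 1) (hgx : g x = f x) : locSlope g x = locSlope f x :=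
  (hg.locSlope_le hgx).antisymm (hg.locSlope_le_locSlope hf h0 hx hgx)

end IsRightContinuousModification

end LocSlope

theorem continuousWithinAt_Icc_of_inter_Ioi {α β : Type*} [LinearOrder α] [TopologicalSpace α]
    [TopologicalSpace β] {f : α → β} {a b x : α} (hx : a ≤ x)
    (hc : ContinuousWithinAt f (Icc a b ∩ Ioi x) x) : ContinuousWithinAt f (Icc x b) x := by
  refine (continuousWithinAt_insert_self.2 hc).mono fun y hy => ?_
  rcases hy.1.eq_or_lt with rfl | hxy
  · exact mem_insert _ _
  · exact mem_insert_of_mem _ ⟨⟨hx.trans hxy.le, hy.2⟩, hxy⟩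

theorem MonotoneOn.totalVar_eq {f : ℝ → ℝ} (hf : MonotoneOn f (Icc 0 1)) :
    totalVar f = ENNReal.ofReal (f 1 - f 0) := by
  simpa [totalVar] using hf.eVariationOn_eq (left_mem_Icc.2 zero_le_one) (right_mem_Icc.2 zero_le_one)

theorem weakNorm_congr_ae {f g : ℝ → ℝ}
    (h : ∀ᵐ x, x ∈ Icc (0 : ℝ) 1 → locSlope g x = locSlope f x) : weakNorm g = weakNorm f := by
  refine iSup_congr fun t => iSup_congr fun _ => congrArg _ (measure_congr ?_)
  filter_upwards [h] with x hx
  exact propext (and_congr_right fun hx01 => by rw [hx hx01])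

/-- For a nondecreasing `f : [0,1] → ℝ` right-continuous at `0`, its right-continuous
modification `f̃` (the right limit at every `x < 1`, and `f̃(1) = f(1)`) satisfies
`V(f̃) = V(f)`, `Λ_{f̃} = Λ_f` at every point of right-continuity of `f`, and
`‖f̃‖_w = ‖f‖_w`. -/
theorem rc_modification_properties (f : ℝ → ℝ) (hmono : MonotoneOn f (Set.Icc 0 1))
    (h0 : ContinuousWithinAt f (Set.Icc (0:ℝ) 1) 0)
    (ftil : ℝ → ℝ)
    (hlim : ∀ x ∈ Set.Ico (0:ℝ) 1,
      Filter.Tendsto f (nhdsWithin x (Set.Ioi x)) (nhds (ftil x)))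
    (h1 : ftil 1 = f 1) :
    totalVar ftil = totalVar f ∧
    (∀ x ∈ Set.Icc (0:ℝ) 1, ContinuousWithinAt f (Set.Icc x 1) x →
      locSlope ftil x = locSlope f x) ∧
    weakNorm ftil = weakNorm f := by
  have hg : IsRightContinuousModification f ftil 0 1 := ⟨hlim, h1⟩
  have hg0 : ftil 0 = f 0 := hg.eq_of_continuousWithinAt (by simp) h0
  have hslope : ∀ x ∈ Icc (0 : ℝ) 1, ContinuousWithinAt f (Icc x 1) x →
      locSlope ftil x = locSlope f x := fun x hx hc =>
    hg.locSlope_eq hmono hg0 hx (hg.eq_of_continuousWithinAt hx hc)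
  refine ⟨?_, hslope, weakNorm_congr_ae ?_⟩
  · rw [(hg.monotoneOn hmono).totalVar_eq, hmono.totalVar_eq, h1, hg0]
  · filter_upwards [hmono.countable_not_continuousWithinAt_Ioi.ae_notMem volume] with x hx hx01
    refine hslope x hx01 ?_
    exact continuousWithinAt_Icc_of_inter_Ioi hx01.1 (by simpa [hx01] using hx)
end

section
/- For every f : [0,1] → ℝ and every partition 0 ≤ x_1 < x_2 < ⋯ < x_n ≤ 1, one has ∫_{[0,1]} Λ_f(x) dx ≥ Σ_{i=1}^{n−1} |f(x_{i+1}) − f(x_i)|. -/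
/- Over each gap `(x_i, x_{i+1})` of the partition, every point `y` sees, from one of the two
endpoints, a difference quotient at least the chord slope `|f(x_{i+1}) − f(x_i)| / (x_{i+1} − x_i)`;
hence `Λ_f` dominates that slope on the gap, and integrating over the gap recovers
`|f(x_{i+1}) − f(x_i)|`. The gaps are disjoint subsets of `[0,1]`. -/

open MeasureTheory Set ENNReal

theorem abs_sub_div_le_max_of_mem_Ioo (g : ℝ → ℝ) {a b y : ℝ} (hy : y ∈ Ioo a b) :
    |g b - g a| / (b - a) ≤ max (|g y - g a| / (y - a)) (|g y - g b| / (b - y)) := by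
  obtain ⟨hay, hyb⟩ := hy
  set M := max (|g y - g a| / (y - a)) (|g y - g b| / (b - y))
  have hleft : |g y - g a| ≤ M * (y - a) :=
    (div_le_iff₀ (sub_pos.2 hay)).1 (le_max_left _ _)
  have hright : |g y - g b| ≤ M * (b - y) :=
    (div_le_iff₀ (sub_pos.2 hyb)).1 (le_max_right _ _)
  rw [div_le_iff₀ (by linarith)]
  calc |g b - g a| ≤ |g b - g y| + |g y - g a| := abs_sub_le _ _ _
    _ = |g y - g a| + |g y - g b| := by rw [abs_sub_comm (g b), add_comm]
    _ ≤ M * (b - a) := by linarith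

theorem ofReal_le_locSlope (f : ℝ → ℝ) {y x' : ℝ} (hx' : x' ∈ Icc (0:ℝ) 1) (hne : x' ≠ y) :
    ENNReal.ofReal (|f y - f x'| / |y - x'|) ≤ locSlope f y :=
  le_iSup_of_le x' (le_iSup_of_le hx' (le_iSup_of_le hne le_rfl))

theorem ofReal_abs_sub_div_le_locSlope (f : ℝ → ℝ) {a b y : ℝ} (ha : a ∈ Icc (0:ℝ) 1)
    (hb : b ∈ Icc (0:ℝ) 1) (hy : y ∈ Ioo a b) :
    ENNReal.ofReal (|f b - f a| / (b - a)) ≤ locSlope f y := by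
  have hslope_a : ENNReal.ofReal (|f y - f a| / (y - a)) ≤ locSlope f y := by
    simpa only [abs_of_pos (sub_pos.2 hy.1)] using ofReal_le_locSlope f ha hy.1.ne
  have hslope_b : ENNReal.ofReal (|f y - f b| / (b - y)) ≤ locSlope f y := by
    simpa only [abs_sub_comm y b, abs_of_pos (sub_pos.2 hy.2)] using
      ofReal_le_locSlope f hb hy.2.ne'
  calc ENNReal.ofReal (|f b - f a| / (b - a))
      ≤ ENNReal.ofReal (max (|f y - f a| / (y - a)) (|f y - f b| / (b - y))) :=
        ENNReal.ofReal_le_ofReal (abs_sub_div_le_max_of_mem_Ioo f hy)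
    _ ≤ locSlope f y := by
        rw [ENNReal.ofReal_max]; exact max_le hslope_a hslope_b

theorem ofReal_abs_sub_le_setLIntegral_locSlope (f : ℝ → ℝ) {a b : ℝ} (ha : a ∈ Icc (0:ℝ) 1)
    (hb : b ∈ Icc (0:ℝ) 1) (hab : a < b) :
    ENNReal.ofReal |f b - f a| ≤ ∫⁻ y in Ioo a b, locSlope f y :=
  calc ENNReal.ofReal |f b - f a|
      = ∫⁻ _ in Ioo a b, ENNReal.ofReal (|f b - f a| / (b - a)) := by
        rw [setLIntegral_const, Real.volume_Ioo,
          ← ENNReal.ofReal_mul (div_nonneg (abs_nonneg _) (sub_pos.2 hab).le),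
          div_mul_cancel₀ _ (sub_pos.2 hab).ne']
    _ ≤ ∫⁻ y in Ioo a b, locSlope f y :=
        setLIntegral_mono' measurableSet_Ioo fun _ hy ↦ ofReal_abs_sub_div_le_locSlope f ha hb hy

theorem Monotone.pairwise_disjoint_on_Ioo_castSucc_succ {α : Type*} [Preorder α] {n : ℕ}
    {x : Fin (n + 1) → α} (hx : Monotone x) :
    Pairwise (Function.onFun Disjoint fun i : Fin n ↦ Ioo (x i.castSucc) (x i.succ)) :=
  (pairwise_disjoint_on _).2 fun _ _ hij ↦ disjoint_left.2 fun _ hi hj ↦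
    hj.1.not_ge (hi.2.le.trans (hx (Fin.succ_le_castSucc_iff.2 hij)))

/-- For every `f : [0,1] → ℝ` and every partition `0 ≤ x_1 < ⋯ < x_n ≤ 1`,
`∫_{[0,1]} Λ_f ≥ Σ_i |f(x_{i+1}) − f(x_i)|`. -/
theorem strong_ge_partition_variation (f : ℝ → ℝ) (n : ℕ) (x : Fin (n + 1) → ℝ)
    (hx : StrictMono x) (hmem : ∀ i, x i ∈ Set.Icc (0:ℝ) 1) :
    ENNReal.ofReal (∑ i : Fin n, |f (x i.succ) - f (x i.castSucc)|) ≤ strongNorm f := by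
  set gap : Fin n → Set ℝ := fun i ↦ Ioo (x i.castSucc) (x i.succ)
  have hgaps : (⋃ i, gap i) ⊆ Icc 0 1 := iUnion_subset fun i ↦
    Ioo_subset_Icc_self.trans (Icc_subset_Icc (hmem _).1 (hmem _).2)
  calc ENNReal.ofReal (∑ i : Fin n, |f (x i.succ) - f (x i.castSucc)|)
      = ∑ i : Fin n, ENNReal.ofReal |f (x i.succ) - f (x i.castSucc)| :=
        ENNReal.ofReal_sum_of_nonneg fun _ _ ↦ abs_nonneg _
    _ ≤ ∑ i : Fin n, ∫⁻ y in gap i, locSlope f y :=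
        Finset.sum_le_sum fun i _ ↦ ofReal_abs_sub_le_setLIntegral_locSlope f (hmem _) (hmem _)
          (hx Fin.castSucc_lt_succ)
    _ = ∫⁻ y in ⋃ i, gap i, locSlope f y := by
        rw [lintegral_iUnion (fun _ ↦ measurableSet_Ioo)
          hx.monotone.pairwise_disjoint_on_Ioo_castSucc_succ, tsum_fintype]
    _ ≤ strongNorm f := lintegral_mono_set hgaps
end

section
/- Let f : [0,1] → ℝ be the piecewise linear function determined by f(1/n) = Σ_{k=1}^n (−1)^{k+1}/k for every integer n ≥ 1, extended linearly between consecutive points 1/(n+1) and 1/n, with f(0) = 0. Then V(f) = ∞ and ‖f‖_w ≤ 2; moreover for every t > 0, {x ∈ [0,1] : Λ_f(x) ≥ t} ⊆ [0, 2/t]. -/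
/-!
Consecutive node values differ by `1/(n+1)`, so on `[1/(n+1), 1/n]` the function is affine with
slope `±n`, and the jumps along the nodes sum to the harmonic series: the variation is infinite.
On the other hand the partial sums of the alternating harmonic series lie in `[0, 1]`, so `f` maps
`[0, 1]` into itself, and gluing the pieces makes `f` `n`-Lipschitz on `[1/(n+1), 1]`,
whence `|f y - f x| ≤ (y - x)/x` for `0 < x ≤ y ≤ 1`. Splitting according to whether `x'` lies
below `x/2` bounds the local slope at `x` by `2/x`, which puts `{Λ_f ≥ t}` inside `[0, 2/t]`.
-/

open MeasureTheory Set ENNReal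

open Filter

theorem Antitone.sum_range_alternating_mem_Icc {R : Type*} [Ring R] [PartialOrder R]
    [IsOrderedRing R] {a : ℕ → R} (ha : Antitone a) (ha0 : ∀ i, 0 ≤ a i) (n : ℕ) :
    ∑ i ∈ Finset.range n, (-1) ^ i * a i ∈ Icc 0 (a 0) := by
  induction n generalizing a with
  | zero => simpa using ha0 0
  | succ n ih =>
    obtain ⟨h0, h1⟩ := ih (fun i j hij => ha (Nat.succ_le_succ hij)) (fun i => ha0 (i + 1))
    simp only [Finset.sum_range_succ', pow_succ, pow_zero, mul_neg_one, neg_mul,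
      Finset.sum_neg_distrib, one_mul, neg_add_eq_sub]
    exact ⟨sub_nonneg.2 (h1.trans (ha zero_le_one)), sub_le_self _ h0⟩

noncomputable def altHarmonic (n : ℕ) : ℝ := ∑ k ∈ Finset.Icc 1 n, (-1 : ℝ) ^ (k + 1) / k

theorem altHarmonic_eq_sum_range (n : ℕ) :
    altHarmonic n = ∑ i ∈ Finset.range n, (-1) ^ i * (1 / ((i : ℝ) + 1)) := by
  rw [altHarmonic, ← Finset.Ico_add_one_right_eq_Icc, Finset.sum_Ico_eq_sum_range,
    Nat.add_sub_cancel]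
  refine Finset.sum_congr rfl fun i _ => ?_
  push_cast
  ring

theorem altHarmonic_mem_Icc (n : ℕ) : altHarmonic n ∈ Icc 0 1 := by
  rw [altHarmonic_eq_sum_range]
  have hanti : Antitone fun i : ℕ => 1 / ((i : ℝ) + 1) := fun i j hij => by
    dsimp only
    gcongr
  simpa using Antitone.sum_range_alternating_mem_Icc hanti (fun i => by positivity) n

theorem abs_altHarmonic_succ_sub (n : ℕ) :
    |altHarmonic (n + 1) - altHarmonic n| = 1 / ((n : ℝ) + 1) := by
  rw [altHarmonic_eq_sum_range, altHarmonic_eq_sum_range, Finset.sum_range_succ,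
    add_sub_cancel_left, abs_mul, abs_pow, abs_neg, abs_one, one_pow, one_mul,
    abs_of_pos (by positivity)]

theorem LipschitzOnWith.glue_Icc {E : Type*} [PseudoMetricSpace E] {g : ℝ → E} {K : NNReal}
    {a b c : ℝ} (hab : LipschitzOnWith K g (Icc a b)) (hbc : LipschitzOnWith K g (Icc b c)) :
    LipschitzOnWith K g (Icc a c) := by
  refine LipschitzOnWith.of_dist_le_mul fun x hx y hy => ?_
  wlog hxy : x ≤ y generalizing x y
  · rw [dist_comm, dist_comm x]
    exact this y hy x hx (le_of_not_ge hxy)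
  rcases le_total y b with hyb | hby
  · exact hab.dist_le_mul x ⟨hx.1, hxy.trans hyb⟩ y ⟨hy.1, hyb⟩
  rcases le_total b x with hbx | hxb
  · exact hbc.dist_le_mul x ⟨hbx, hx.2⟩ y ⟨hbx.trans hxy, hy.2⟩
  have hb_between : dist x b + dist b y = dist x y := by
    simp only [Real.dist_eq]
    rw [abs_of_nonpos (by linarith), abs_of_nonpos (by linarith), abs_of_nonpos (by linarith)]
    ring
  calc dist (g x) (g y) ≤ dist (g x) (g b) + dist (g b) (g y) := dist_triangle _ _ _
    _ ≤ K * dist x b + K * dist b y :=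
      add_le_add (hab.dist_le_mul x ⟨hx.1, hxb⟩ b ⟨hx.1.trans hxb, le_rfl⟩)
        (hbc.dist_le_mul b ⟨le_rfl, hby.trans hy.2⟩ y ⟨hby, hy.2⟩)
    _ = K * dist x y := by rw [← mul_add, hb_between]

theorem mem_uIcc_of_eqOn_affine {f : ℝ → ℝ} {a b c d x : ℝ}
    (h : ∀ y ∈ Icc a b, f y = c * y + d) (hx : x ∈ Icc a b) : f x ∈ uIcc (f a) (f b) := by
  have hab : a ≤ b := hx.1.trans hx.2
  rw [h x hx, h a ⟨le_rfl, hab⟩, h b ⟨hab, le_rfl⟩, mem_uIcc]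
  rcases le_total 0 c with hc | hc
  · exact Or.inl ⟨by nlinarith [hx.1], by nlinarith [hx.2]⟩
  · exact Or.inr ⟨by nlinarith [hx.2], by nlinarith [hx.1]⟩

theorem exists_nat_mem_Icc_one_div {x : ℝ} (hx : x ∈ Ioc 0 1) :
    ∃ n : ℕ, 1 ≤ n ∧ (n : ℝ) ≤ 1 / x ∧ x ∈ Icc (1 / ((n : ℝ) + 1)) (1 / n) := by
  have hx1 : 1 ≤ 1 / x := by rw [le_div_iff₀ hx.1]; linarith [hx.2]
  have hn : 1 ≤ ⌊1 / x⌋₊ := Nat.le_floor (by exact_mod_cast hx1)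
  have hn0 : (0 : ℝ) < ⌊1 / x⌋₊ := by exact_mod_cast hn
  have hle : (⌊1 / x⌋₊ : ℝ) ≤ 1 / x := Nat.floor_le (by linarith)
  refine ⟨⌊1 / x⌋₊, hn, hle, ?_, ?_⟩
  · rw [div_le_iff₀ (by positivity), ← div_le_iff₀' hx.1]
    exact (Nat.lt_floor_add_one _).le
  · rwa [le_div_iff₀ hn0, mul_comm, ← le_div_iff₀ hx.1]

theorem locSlope_le_ofReal {f : ℝ → ℝ} {x L : ℝ}
    (h : ∀ x' ∈ Icc (0 : ℝ) 1, x' ≠ x → |f x - f x'| ≤ L * |x - x'|) :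
    locSlope f x ≤ ENNReal.ofReal L :=
  iSup₂_le fun x' hx' => iSup_le fun hne => ENNReal.ofReal_le_ofReal <|
    (div_le_iff₀ (abs_pos.2 (sub_ne_zero.2 hne.symm))).2 (h x' hx' hne)

theorem locSlope_le_two_div {f : ℝ → ℝ} (hmaps : MapsTo f (Icc 0 1) (Icc 0 1))
    (hlip : ∀ x y : ℝ, 0 < x → x ≤ y → y ≤ 1 → |f y - f x| ≤ (y - x) / x)
    {x : ℝ} (hx : x ∈ Ioc 0 1) : locSlope f x ≤ ENNReal.ofReal (2 / x) := by
  refine locSlope_le_ofReal fun x' hx' hne => ?_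
  have hx0 := hx.1
  rcases hne.lt_or_gt with hlt | hgt
  · rw [abs_of_pos (sub_pos.2 hlt)]
    rcases le_or_gt (x / 2) x' with hhalf | hhalf
    · have hx'0 : 0 < x' := by linarith
      calc |f x - f x'| ≤ (x - x') / x' := hlip x' x hx'0 hlt.le hx.2
        _ ≤ (x - x') / (x / 2) := by gcongr
        _ = 2 / x * (x - x') := by field_simp
    · obtain ⟨hfx0, hfx1⟩ := hmaps ⟨hx0.le, hx.2⟩
      obtain ⟨hfx'0, hfx'1⟩ := hmaps hx'
      calc |f x - f x'| ≤ 1 := abs_sub_le_of_nonneg_of_le hfx0 hfx1 hfx'0 hfx'1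
        _ = 2 / x * (x / 2) := by field_simp
        _ ≤ 2 / x * (x - x') := by gcongr; linarith
  · rw [abs_sub_comm, abs_sub_comm x, abs_of_pos (sub_pos.2 hgt)]
    calc |f x' - f x| ≤ (x' - x) / x := hlip x x' hx0 hgt.le hx'.2
      _ ≤ 2 / x * (x' - x) := by
        rw [div_mul_eq_mul_div, div_le_div_iff_of_pos_right hx0]
        linarith

theorem ENNReal.eq_top_of_forall_ofReal_le_of_tendsto {x : ℝ≥0∞} {u : ℕ → ℝ}
    (hu : Tendsto u atTop atTop) (h : ∀ N, ENNReal.ofReal (u N) ≤ x) : x = ⊤ := by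
  refine ENNReal.eq_top_of_forall_nnreal_le fun r => ?_
  obtain ⟨N, hN⟩ := (hu.eventually_ge_atTop (r : ℝ)).exists
  calc (r : ℝ≥0∞) = ENNReal.ofReal r := ENNReal.ofReal_coe_nnreal.symm
    _ ≤ ENNReal.ofReal (u N) := ENNReal.ofReal_le_ofReal hN
    _ ≤ x := h N

theorem tendsto_sum_range_one_div_add_two :
    Tendsto (fun N : ℕ => ∑ i ∈ Finset.range N, 1 / ((i : ℝ) + 2)) atTop atTop := by
  refine (tendsto_atTop_add_const_right _ (-1)
    (Real.tendsto_sum_range_one_div_nat_succ_atTop.comp (tendsto_add_atTop_nat 1))).congr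
    fun N => ?_
  simp only [Function.comp_apply, Finset.sum_range_succ' _ N]
  push_cast
  ring_nf

theorem eVariationOn_comp_one_div_Ici_le {E : Type*} [PseudoEMetricSpace E] (f : ℝ → E) :
    eVariationOn (f ∘ fun y => 1 / y) (Ici 1) ≤ eVariationOn f (Icc 0 1) := by
  refine eVariationOn.comp_le_of_antitoneOn f _ (fun y hy z _ hyz => ?_) fun y hy => ?_
  · exact one_div_le_one_div_of_le (zero_lt_one.trans_le hy) hyz
  · have hy0 : (0 : ℝ) < y := zero_lt_one.trans_le hy
    exact ⟨one_div_nonneg.2 hy0.le, (div_le_one hy0).2 hy⟩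

theorem setOf_ofReal_le_locSlope_subset {f : ℝ → ℝ} {C t : ℝ} (hC : 0 ≤ C) (ht : 0 < t)
    (h : ∀ x ∈ Ioc (0 : ℝ) 1, locSlope f x ≤ ENNReal.ofReal (C / x)) :
    {x ∈ Icc (0 : ℝ) 1 | ENNReal.ofReal t ≤ locSlope f x} ⊆ Icc 0 (C / t) := by
  rintro x ⟨hx, hxt⟩
  refine ⟨hx.1, ?_⟩
  rcases hx.1.eq_or_lt with rfl | hx0
  · positivity
  have := (ENNReal.ofReal_le_ofReal_iff (by positivity)).1 (hxt.trans (h x ⟨hx0, hx.2⟩))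
  rw [le_div_iff₀ hx0] at this
  rwa [le_div_iff₀ ht, mul_comm]

theorem weakNorm_le_of_setOf_subset {f : ℝ → ℝ} {C : ℝ}
    (h : ∀ t : ℝ, 0 < t →
      {x ∈ Icc (0 : ℝ) 1 | ENNReal.ofReal t ≤ locSlope f x} ⊆ Icc 0 (C / t)) :
    weakNorm f ≤ ENNReal.ofReal C := by
  refine iSup₂_le fun t ht => ?_
  calc ENNReal.ofReal t * volume {x ∈ Icc (0 : ℝ) 1 | ENNReal.ofReal t ≤ locSlope f x}
      ≤ ENNReal.ofReal t * volume (Icc 0 (C / t)) := by gcongr; exact h t ht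
    _ = ENNReal.ofReal C := by
      rw [Real.volume_Icc, sub_zero, ← ENNReal.ofReal_mul ht.le, mul_div_cancel₀ _ ht.ne']

section
variable {f : ℝ → ℝ} (hval : ∀ n : ℕ, 1 ≤ n → f (1 / (n : ℝ)) = altHarmonic n)
include hval

theorem apply_one_div_add_one (n : ℕ) : f (1 / ((n : ℝ) + 1)) = altHarmonic (n + 1) := by
  exact_mod_cast hval (n + 1) n.succ_pos

theorem totalVar_eq_top : totalVar f = ⊤ := by
  have hnode : ∀ i : ℕ, edist (f (1 / ((i : ℝ) + 1 + 1))) (f (1 / ((i : ℝ) + 1)))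
      = ENNReal.ofReal (1 / ((i : ℝ) + 2)) := by
    intro i
    have h2 := apply_one_div_add_one hval (i + 1)
    push_cast at h2
    rw [edist_dist, Real.dist_eq, h2, apply_one_div_add_one hval, abs_altHarmonic_succ_sub]
    push_cast
    ring_nf
  refine ENNReal.eq_top_of_forall_ofReal_le_of_tendsto tendsto_sum_range_one_div_add_two
    fun N => ?_
  calc ENNReal.ofReal (∑ i ∈ Finset.range N, 1 / ((i : ℝ) + 2))
      = ∑ i ∈ Finset.range N,
          edist (f (1 / ((i : ℝ) + 1 + 1))) (f (1 / ((i : ℝ) + 1))) := by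
        rw [ENNReal.ofReal_sum_of_nonneg fun i _ => by positivity]
        exact Finset.sum_congr rfl fun i _ => (hnode i).symm
    _ ≤ eVariationOn (f ∘ fun y => 1 / y) (Ici 1) := by
        have hmono : Monotone fun i : ℕ => (i : ℝ) + 1 := fun i j hij => by dsimp only; gcongr
        simpa using eVariationOn.sum_le (f := f ∘ fun y : ℝ => 1 / y) hmono
          (fun i => show (i : ℝ) + 1 ∈ Ici 1 by simp)
    _ ≤ totalVar f := eVariationOn_comp_one_div_Ici_le f

variable (hlin : ∀ n : ℕ, 1 ≤ n → ∃ c d : ℝ,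
  ∀ x ∈ Icc (1 / ((n : ℝ) + 1)) (1 / (n : ℝ)), f x = c * x + d)
include hlin

theorem lipschitzOnWith_Icc_one_div_add_one_one_div {n : ℕ} (hn : 1 ≤ n) :
    LipschitzOnWith n f (Icc (1 / ((n : ℝ) + 1)) (1 / n)) := by
  obtain ⟨c, d, hcd⟩ := hlin n hn
  have hn0 : (0 : ℝ) < n := by exact_mod_cast hn
  have hab : 1 / ((n : ℝ) + 1) < 1 / n := one_div_lt_one_div_of_lt hn0 (by linarith)
  have hc : |c| = n := by
    have hgap : |f (1 / n) - f (1 / ((n : ℝ) + 1))| = 1 / ((n : ℝ) + 1) := by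
      rw [hval n hn, apply_one_div_add_one hval, abs_sub_comm, abs_altHarmonic_succ_sub]
    rw [hcd _ ⟨hab.le, le_rfl⟩, hcd _ ⟨le_rfl, hab.le⟩, add_sub_add_right_eq_sub,
      ← mul_sub, abs_mul, abs_of_pos (sub_pos.2 hab)] at hgap
    field_simp at hgap
    linarith
  refine LipschitzOnWith.of_dist_le_mul fun x hx y hy => le_of_eq ?_
  rw [Real.dist_eq, Real.dist_eq, hcd x hx, hcd y hy, NNReal.coe_natCast, ← hc, ← abs_mul]
  ring_nf

theorem lipschitzOnWith_Icc_one_div_add_one_one {n : ℕ} (hn : 1 ≤ n) :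
    LipschitzOnWith n f (Icc (1 / ((n : ℝ) + 1)) 1) := by
  induction n, hn using Nat.le_induction with
  | base => simpa using lipschitzOnWith_Icc_one_div_add_one_one_div hval hlin le_rfl
  | succ n hn ih =>
    have hpiece := lipschitzOnWith_Icc_one_div_add_one_one_div hval hlin (n.le_succ.trans' hn)
    push_cast at hpiece ⊢
    exact hpiece.glue_Icc (ih.weaken (by simp))

theorem abs_sub_le_sub_div {x y : ℝ} (hx : 0 < x) (hxy : x ≤ y) (hy : y ≤ 1) :
    |f y - f x| ≤ (y - x) / x := by
  obtain ⟨n, hn, hnx, hxn⟩ := exists_nat_mem_Icc_one_div ⟨hx, hxy.trans hy⟩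
  have hlip := (lipschitzOnWith_Icc_one_div_add_one_one hval hlin hn).dist_le_mul
    y ⟨hxn.1.trans hxy, hy⟩ x ⟨hxn.1, hxy.trans hy⟩
  rw [Real.dist_eq, Real.dist_eq, NNReal.coe_natCast, abs_of_nonneg (sub_nonneg.2 hxy)] at hlip
  calc |f y - f x| ≤ n * (y - x) := hlip
    _ ≤ 1 / x * (y - x) := by gcongr
    _ = (y - x) / x := by ring

theorem mapsTo_Icc_zero_one (hf0 : f 0 = 0) : MapsTo f (Icc 0 1) (Icc 0 1) := by
  intro x hx
  rcases hx.1.eq_or_lt with rfl | hx0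
  · rw [hf0]
    exact ⟨le_rfl, zero_le_one⟩
  obtain ⟨n, hn, -, hxn⟩ := exists_nat_mem_Icc_one_div ⟨hx0, hx.2⟩
  obtain ⟨c, d, hcd⟩ := hlin n hn
  refine uIcc_subset_Icc ?_ ?_ (mem_uIcc_of_eqOn_affine hcd hxn)
  · rw [apply_one_div_add_one hval]
    exact altHarmonic_mem_Icc _
  · rw [hval n hn]
    exact altHarmonic_mem_Icc _

end

/-- The piecewise linear function with `f(1/n) = Σ_{k=1}^n (−1)^{k+1}/k` and `f(0) = 0`
has infinite variation, weak average smoothness at most `2`, and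
`{x ∈ [0,1] : Λ_f(x) ≥ t} ⊆ [0, 2/t]` for every `t > 0`. -/
theorem alternating_harmonic_separation (f : ℝ → ℝ) (hf0 : f 0 = 0)
    (hval : ∀ n : ℕ, 1 ≤ n →
      f (1 / (n : ℝ)) = ∑ k ∈ Finset.Icc 1 n, (-1 : ℝ) ^ (k + 1) / (k : ℝ))
    (hlin : ∀ n : ℕ, 1 ≤ n → ∃ c d : ℝ,
      ∀ x ∈ Set.Icc (1 / ((n : ℝ) + 1)) (1 / (n : ℝ)), f x = c * x + d) :
    totalVar f = ⊤ ∧ weakNorm f ≤ 2 ∧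
    ∀ t : ℝ, 0 < t →
      {x ∈ Set.Icc (0:ℝ) 1 | ENNReal.ofReal t ≤ locSlope f x} ⊆ Set.Icc 0 (2 / t) := by
  have hslope : ∀ x ∈ Ioc (0 : ℝ) 1, locSlope f x ≤ ENNReal.ofReal (2 / x) := fun x hx =>
    locSlope_le_two_div (mapsTo_Icc_zero_one hval hlin hf0)
      (fun _ _ hx hxy hy => abs_sub_le_sub_div hval hlin hx hxy hy) hx
  have hlevel := fun t (ht : (0 : ℝ) < t) => setOf_ofReal_le_locSlope_subset zero_le_two ht hslope
  exact ⟨totalVar_eq_top hval, by simpa using weakNorm_le_of_setOf_subset hlevel, hlevel⟩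
end

section
/- Fat-shattering lower bound for the strong class: for every L > 0 and γ > 0, setting n = 1 + ⌊L/(2γ)⌋, there exist points x_1, …, x_n ∈ [0,1] and thresholds r_1, …, r_n ∈ ℝ such that for every labeling y ∈ {−1,1}^n there exists an L-Lipschitz function f : [0,1] → ℝ (hence ‖f‖_s ≤ L) with y_i·(f(x_i) − r_i) ≥ γ for all i ∈ {1, …, n}. -/
open MeasureTheory Set ENNReal

/-! The points `i · (2γ/L)`, `i ≤ ⌊L/(2γ)⌋`, lie in `[0,1]` and are `2γ/L` apart, so any
prescribed values `±γ` at them differ by at most `L` times their distance. By the McShane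
extension such values are interpolated by an `L`-Lipschitz function, whose local slope is then
everywhere at most `L`. -/

theorem locSlope_le_of_lipschitzOnWith {f : ℝ → ℝ} {K : NNReal}
    (hf : LipschitzOnWith K f (Icc 0 1)) {x : ℝ} (hx : x ∈ Icc (0 : ℝ) 1) :
    locSlope f x ≤ K := by
  refine iSup₂_le fun x' hx' => iSup_le fun hne => ?_
  rw [ENNReal.ofReal_le_iff_le_toReal coe_ne_top, coe_toReal,
    div_le_iff₀ (abs_pos.2 (sub_ne_zero.2 hne.symm))]
  exact hf.dist_le_mul x hx x' hx'

theorem strongNorm_le_of_lipschitzOnWith {f : ℝ → ℝ} {K : NNReal}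
    (hf : LipschitzOnWith K f (Icc 0 1)) : strongNorm f ≤ K :=
  calc strongNorm f ≤ ∫⁻ _ in Icc (0 : ℝ) 1, (K : ℝ≥0∞) :=
        setLIntegral_mono measurable_const fun _ hx => locSlope_le_of_lipschitzOnWith hf hx
    _ = K := by simp [Real.volume_Icc]

theorem exists_lipschitzWith_interpolating {α ι : Type*} [PseudoMetricSpace α] {K : NNReal}
    (p : ι → α) (c : ι → ℝ) (h : ∀ i j, dist (c i) (c j) ≤ K * dist (p i) (p j)) :
    ∃ g : α → ℝ, LipschitzWith K g ∧ ∀ i, g (p i) = c i := by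
  classical
  -- well defined on `range p`: `p i = p j` forces `c i = c j` by `h`
  let f : α → ℝ := fun x => if hx : ∃ i, p i = x then c hx.choose else 0
  have hf : ∀ i, f (p i) = c i := fun i => by
    have hx : ∃ j, p j = p i := ⟨i, rfl⟩
    have := h hx.choose i
    rw [hx.choose_spec, dist_self, mul_zero] at this
    simpa only [f, dif_pos hx] using dist_le_zero.1 this
  have hlip : LipschitzOnWith K f (range p) := by
    refine LipschitzOnWith.of_dist_le_mul ?_
    rintro _ ⟨i, rfl⟩ _ ⟨j, rfl⟩
    simpa only [hf] using h i j
  obtain ⟨g, hg, hfg⟩ := hlip.extend_real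
  exact ⟨g, hg, fun i => (hfg (mem_range_self i)).symm.trans (hf i)⟩

theorem exists_lipschitzWith_interpolating_of_separated {α ι : Type*} [PseudoMetricSpace α]
    {K : NNReal} {δ : ℝ} (p : ι → α) (c : ι → ℝ)
    (hp : Pairwise fun i j => δ ≤ dist (p i) (p j)) (hc : ∀ i, 2 * |c i| ≤ K * δ) :
    ∃ g : α → ℝ, LipschitzWith K g ∧ ∀ i, g (p i) = c i := by
  refine exists_lipschitzWith_interpolating p c fun i j => ?_
  rcases eq_or_ne i j with rfl | hij
  · simp
  calc dist (c i) (c j) ≤ |c i| + |c j| := abs_sub _ _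
    _ ≤ K * δ := by linarith [hc i, hc j]
    _ ≤ K * dist (p i) (p j) := by gcongr; exact hp hij

theorem natCast_mul_mem_Icc {m i : ℕ} (hi : i ≤ m) {d : ℝ} (hd : 0 ≤ d) (hmd : m * d ≤ 1) :
    (i : ℝ) * d ∈ Icc (0 : ℝ) 1 :=
  ⟨by positivity, le_trans (by gcongr) hmd⟩

theorem le_dist_natCast_mul {i j : ℕ} (hij : i ≠ j) {d : ℝ} (hd : 0 ≤ d) :
    d ≤ dist ((i : ℝ) * d) ((j : ℝ) * d) := by
  have h1 : (1 : ℝ) ≤ |(i : ℝ) - j| := by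
    exact_mod_cast Int.one_le_abs (sub_ne_zero.2 (Int.natCast_inj.not.2 hij))
  rw [Real.dist_eq, ← sub_mul, abs_mul, abs_of_nonneg hd]
  nlinarith

/-- Fat-shattering lower bound for the strong class: for `L, γ > 0` and
`n = 1 + ⌊L/(2γ)⌋`, there are `n` points in `[0,1]` and thresholds that are
`γ`-shattered by `L`-Lipschitz functions (which have `‖f‖_s ≤ L`). -/
theorem strong_class_fat_shattering_lower (L γ : ℝ) (hL : 0 < L) (hγ : 0 < γ) :
    ∃ x r : Fin (1 + Nat.floor (L / (2 * γ))) → ℝ,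
      (∀ i, x i ∈ Set.Icc (0:ℝ) 1) ∧
      ∀ y : Fin (1 + Nat.floor (L / (2 * γ))) → ℝ, (∀ i, y i = 1 ∨ y i = -1) →
        ∃ f : ℝ → ℝ,
          (∀ u ∈ Set.Icc (0:ℝ) 1, ∀ v ∈ Set.Icc (0:ℝ) 1, |f u - f v| ≤ L * |u - v|) ∧
          strongNorm f ≤ ENNReal.ofReal L ∧
          ∀ i, γ ≤ y i * (f (x i) - r i) := by
  set d := 2 * γ / L
  have hd : 0 < d := by positivity
  have hLd : L * d = 2 * γ := by simp only [d]; field_simp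
  refine ⟨fun i => (i : ℕ) * d, 0, fun i => natCast_mul_mem_Icc (Nat.lt_one_add_iff.1 i.2) hd.le ?_,
    fun y hy => ?_⟩
  · calc ⌊L / (2 * γ)⌋₊ * d ≤ L / (2 * γ) * d := by gcongr; exact Nat.floor_le (by positivity)
      _ = 1 := by simp only [d]; field_simp
  obtain ⟨f, hf, hfx⟩ := exists_lipschitzWith_interpolating_of_separated (K := L.toNNReal)
    (fun i : Fin (1 + ⌊L / (2 * γ)⌋₊) => (i : ℕ) * d) (fun i => γ * y i)
    (fun i j hij => le_dist_natCast_mul (Fin.val_ne_of_ne hij) hd.le) fun i => by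
      rcases hy i with h | h <;> simp [h, abs_of_pos hγ, Real.coe_toNNReal _ hL.le, hLd]
  refine ⟨f, fun u _ v _ => ?_, strongNorm_le_of_lipschitzOnWith hf.lipschitzOnWith, fun i => ?_⟩
  · simpa [Real.coe_toNNReal _ hL.le, Real.dist_eq] using hf.dist_le_mul u v
  · rcases hy i with h | h <;> simp [hfx, h]
end

section
/- Fat-shattering upper bound for the strong class: for every L > 0 and γ > 0, if distinct points x_1, …, x_m ∈ [0,1] and thresholds r_1, …, r_m ∈ ℝ are such that for every labeling y ∈ {−1,1}^m there exists f : [0,1] → ℝ with ‖f‖_s ≤ L and y_i·(f(x_i) − r_i) ≥ γ for all i, then m ≤ 1 + ⌊L/(2γ)⌋. -/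
/-! Sort the points and realise the alternating labelling and its negation by `f` and `g`.
Between neighbours `x_k < x_{k+1}` the jumps satisfy `|Δf| + |Δg| ≥ 4γ`. On `(x_k, x_{k+1})` the
local slope dominates the chord slope, so integrating over these disjoint intervals gives
`∑ |Δf| ≤ ‖f‖_s ≤ L`, and likewise for `g`. Hence `4γ (m - 1) ≤ 2L`. -/

open MeasureTheory Set ENNReal

lemma ofReal_div_le_locSlope_s18 (f : ℝ → ℝ) {x x' : ℝ} (hx' : x' ∈ Icc (0 : ℝ) 1) (hne : x' ≠ x) :
    ENNReal.ofReal (|f x - f x'| / |x - x'|) ≤ locSlope f x :=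
  le_iSup_of_le x' <| le_iSup_of_le hx' <| le_iSup_of_le hne le_rfl

/-- The chord slope is a weighted mean of the slopes from `t` to `a` and from `t` to `b`. -/
lemma ofReal_chord_slope_le_locSlope (f : ℝ → ℝ) {a b t : ℝ} (ha : a ∈ Icc (0 : ℝ) 1)
    (hb : b ∈ Icc (0 : ℝ) 1) (ht : t ∈ Ioo a b) :
    ENNReal.ofReal (|f a - f b| / (b - a)) ≤ locSlope f t := by
  obtain ⟨hat, htb⟩ := ht
  have hta : 0 < t - a := sub_pos.2 hat
  have hbt : 0 < b - t := sub_pos.2 htb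
  have hleft := ofReal_div_le_locSlope_s18 f ha hat.ne
  have hright := ofReal_div_le_locSlope_s18 f hb htb.ne'
  rw [abs_of_pos hta] at hleft
  rw [abs_sub_comm t b, abs_of_pos hbt] at hright
  set M := max (|f t - f a| / (t - a)) (|f t - f b| / (b - t))
  have hMa : |f t - f a| ≤ M * (t - a) := (div_le_iff₀ hta).1 (le_max_left _ _)
  have hMb : |f t - f b| ≤ M * (b - t) := (div_le_iff₀ hbt).1 (le_max_right _ _)
  have hchord : |f a - f b| / (b - a) ≤ M := by
    rw [div_le_iff₀ (by linarith)]
    have htri := abs_sub_le (f a) (f t) (f b)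
    rw [abs_sub_comm (f a) (f t)] at htri
    linarith
  calc ENNReal.ofReal (|f a - f b| / (b - a)) ≤ ENNReal.ofReal M := ofReal_le_ofReal hchord
    _ ≤ locSlope f t := by rw [ofReal_max]; exact max_le hleft hright

lemma sum_ofReal_abs_sub_le_strongNorm (F : ℝ → ℝ) {n : ℕ} {z : Fin (n + 1) → ℝ}
    (hz : StrictMono z) (hzI : ∀ j, z j ∈ Icc (0 : ℝ) 1) :
    ∑ k : Fin n, ENNReal.ofReal |F (z k.castSucc) - F (z k.succ)| ≤ strongNorm F := by
  set I : Fin n → Set ℝ := fun k => Ioo (z k.castSucc) (z k.succ)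
  have hI : Pairwise (Function.onFun Disjoint I) := (pairwise_disjoint_on I).2 fun k l hkl =>
    disjoint_left.2 fun t htk htl =>
      (htl.1.trans htk.2).not_ge (hz.monotone (Fin.succ_le_castSucc_iff.2 hkl))
  have hchord (k : Fin n) : ENNReal.ofReal |F (z k.castSucc) - F (z k.succ)| =
      ∫⁻ _ in I k, ENNReal.ofReal
        (|F (z k.castSucc) - F (z k.succ)| / (z k.succ - z k.castSucc)) := by
    have hlen : 0 < z k.succ - z k.castSucc := sub_pos.2 (hz Fin.castSucc_lt_succ)
    rw [setLIntegral_const, Real.volume_Ioo, ← ofReal_mul (by positivity),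
      div_mul_cancel₀ _ hlen.ne']
  calc ∑ k : Fin n, ENNReal.ofReal |F (z k.castSucc) - F (z k.succ)|
      ≤ ∑ k : Fin n, ∫⁻ t in I k, locSlope F t := by
        refine Finset.sum_le_sum fun k _ => (hchord k).trans_le ?_
        exact setLIntegral_mono' measurableSet_Ioo fun t ht =>
          ofReal_chord_slope_le_locSlope F (hzI _) (hzI _) ht
    _ = ∫⁻ t in ⋃ k, I k, locSlope F t := by
        rw [lintegral_iUnion (fun _ => measurableSet_Ioo) hI, tsum_fintype]
    _ ≤ strongNorm F := lintegral_mono_set <| iUnion_subset fun k =>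
        Ioo_subset_Icc_self.trans (Icc_subset_Icc (hzI _).1 (hzI _).2)

lemma four_mul_le_abs_sub_add_abs_sub {γ s a b a' b' c c' : ℝ} (hs : |s| = 1)
    (ha : γ ≤ s * (a - c)) (hb : γ ≤ -s * (b - c'))
    (ha' : γ ≤ -s * (a' - c)) (hb' : γ ≤ s * (b' - c')) :
    4 * γ ≤ |a - b| + |a' - b'| :=
  calc 4 * γ ≤ s * ((a - b) - (a' - b')) := by linarith
    _ ≤ |(a - b) - (a' - b')| := by
        simpa only [abs_mul, hs, one_mul] using le_abs_self (s * ((a - b) - (a' - b')))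
    _ ≤ |a - b| + |a' - b'| := abs_sub _ _

lemma le_floor_div_of_ofReal_mul_le {n : ℕ} {c d : ℝ} (hc : 0 < c)
    (h : ENNReal.ofReal (n * c) ≤ ENNReal.ofReal d) : n ≤ ⌊d / c⌋₊ := by
  rcases ofReal_le_ofReal_iff'.1 h with hle | hle
  · exact Nat.le_floor ((le_div_iff₀ hc).2 hle)
  · simp [Nat.cast_nonpos.1 (nonpos_of_mul_nonpos_left hle hc)]

def StrongClassShatters (L γ : ℝ) {m : ℕ} (x r : Fin m → ℝ) : Prop :=
  ∀ y : Fin m → ℝ, (∀ i, y i = 1 ∨ y i = -1) →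
    ∃ f : ℝ → ℝ, strongNorm f ≤ ENNReal.ofReal L ∧ ∀ i, γ ≤ y i * (f (x i) - r i)

namespace StrongClassShatters

variable {L γ : ℝ} {m : ℕ} {x r : Fin m → ℝ}

lemma comp_perm (h : StrongClassShatters L γ x r) (σ : Equiv.Perm (Fin m)) :
    StrongClassShatters L γ (x ∘ σ) (r ∘ σ) := by
  intro y hy
  obtain ⟨f, hf, hfy⟩ := h (y ∘ σ.symm) fun i => hy _
  exact ⟨f, hf, fun i => by simpa using hfy (σ i)⟩

lemma card_le_of_strictMono (h : StrongClassShatters L γ x r) (hγ : 0 < γ) (hx : StrictMono x)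
    (hxI : ∀ i, x i ∈ Icc (0 : ℝ) 1) : m ≤ 1 + ⌊L / (2 * γ)⌋₊ := by
  obtain _ | n := m
  · exact Nat.zero_le _
  set alt : Fin (n + 1) → ℝ := fun j => (-1) ^ (j : ℕ)
  have halt (j) : alt j = 1 ∨ alt j = -1 := neg_one_pow_eq_or ℝ j
  obtain ⟨f, hfL, hf⟩ := h alt halt
  obtain ⟨g, hgL, hg⟩ := h (-alt) fun j => (halt j).symm.imp (by simp [·]) (by simp [·])
  have hjump (k : Fin n) :
      4 * γ ≤ |f (x k.castSucc) - f (x k.succ)| + |g (x k.castSucc) - g (x k.succ)| := by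
    have hsucc : alt k.succ = -alt k.castSucc := by simp [alt, pow_succ]
    have hgsucc := hg k.succ
    simp only [Pi.neg_apply, hsucc, neg_neg] at hgsucc
    exact four_mul_le_abs_sub_add_abs_sub (s := alt k.castSucc) (by simp [alt])
      (hf k.castSucc) (hsucc ▸ hf k.succ) (hg k.castSucc) hgsucc
  have hsum : (n : ℝ) * (2 * (2 * γ)) ≤
      ∑ k : Fin n, |f (x k.castSucc) - f (x k.succ)| +
        ∑ k : Fin n, |g (x k.castSucc) - g (x k.succ)| := by
    rw [← Finset.sum_add_distrib]
    have hjumps := Finset.sum_le_sum fun k (_ : k ∈ Finset.univ) => hjump k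
    simp only [Finset.sum_const, Finset.card_univ, Fintype.card_fin, nsmul_eq_mul] at hjumps
    linarith
  have hbound : ENNReal.ofReal ((n : ℝ) * (2 * (2 * γ))) ≤ ENNReal.ofReal (2 * L) := by
    calc ENNReal.ofReal ((n : ℝ) * (2 * (2 * γ)))
        ≤ ENNReal.ofReal (∑ k : Fin n, |f (x k.castSucc) - f (x k.succ)|) +
            ENNReal.ofReal (∑ k : Fin n, |g (x k.castSucc) - g (x k.succ)|) := by
          rw [← ofReal_add (by positivity) (by positivity)]
          exact ofReal_le_ofReal hsum
      _ ≤ strongNorm f + strongNorm g := by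
          rw [ofReal_sum_of_nonneg (fun _ _ => abs_nonneg _),
            ofReal_sum_of_nonneg (fun _ _ => abs_nonneg _)]
          exact add_le_add (sum_ofReal_abs_sub_le_strongNorm f hx hxI)
            (sum_ofReal_abs_sub_le_strongNorm g hx hxI)
      _ ≤ ENNReal.ofReal (2 * L) := by
          rw [ofReal_mul zero_le_two, ofReal_ofNat, two_mul]
          exact add_le_add hfL hgL
  have hn := le_floor_div_of_ofReal_mul_le (by positivity) hbound
  rw [mul_div_mul_left _ _ two_ne_zero] at hn
  omega

end StrongClassShatters

theorem strong_class_fat_shattering_upper_general (L γ : ℝ) (hγ : 0 < γ) (m : ℕ)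
    (x r : Fin m → ℝ) (hx : Function.Injective x)
    (hxm : ∀ i, x i ∈ Set.Icc (0:ℝ) 1)
    (hshatter : ∀ y : Fin m → ℝ, (∀ i, y i = 1 ∨ y i = -1) →
      ∃ f : ℝ → ℝ, strongNorm f ≤ ENNReal.ofReal L ∧ ∀ i, γ ≤ y i * (f (x i) - r i)) :
    m ≤ 1 + Nat.floor (L / (2 * γ)) :=
  (StrongClassShatters.comp_perm hshatter (Tuple.sort x)).card_le_of_strictMono hγ
    ((Tuple.monotone_sort x).strictMono_of_injective (hx.comp (Tuple.sort x).injective))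
    fun _ => hxm _

/-- Fat-shattering upper bound for the strong class: if `m` distinct points of `[0,1]`
with some thresholds are `γ`-shattered by `{f : ‖f‖_s ≤ L}`, then `m ≤ 1 + ⌊L/(2γ)⌋`. -/
theorem strong_class_fat_shattering_upper (L γ : ℝ) (hL : 0 < L) (hγ : 0 < γ) (m : ℕ)
    (x r : Fin m → ℝ) (hx : Function.Injective x)
    (hxm : ∀ i, x i ∈ Set.Icc (0:ℝ) 1)
    (hshatter : ∀ y : Fin m → ℝ, (∀ i, y i = 1 ∨ y i = -1) →
      ∃ f : ℝ → ℝ, strongNorm f ≤ ENNReal.ofReal L ∧ ∀ i, γ ≤ y i * (f (x i) - r i)) :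
    m ≤ 1 + Nat.floor (L / (2 * γ)) :=
  strong_class_fat_shattering_upper_general L γ hγ m x r hx hxm hshatter
end
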